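/- arXiv:1902.08685 — 5 statements merged into one kernel-verified Lean document; each statement's English description precedes it below -/
import Mathlib

section
/- Let t₀ ≥ 0 and a, b, c > 0. Let y : [t₀, ∞) → ℝ be continuous and nonnegative, and let g : [0, ∞) → ℝ be positive and nondecreasing. Suppose that y(t) ≤ a·t + b + c·∫_{t₀}^{t} g(y(s)) ds for all t ≥ t₀. Fix η > 0 and define G(u) = ∫_η^u ds/g(s) for u ≥ 0. Then for every t ≥ t₀ one has G(y(t)) ≤ G(a·t₀ + b) + (a/g(a·t₀ + b) + c)·(t − t₀). In particular, since G is strictly increasing, y(t) ≤ G⁻¹( G(a·t₀ + b) + (a/g(a·t₀ + b) + c)·(t − t₀) ) whenever the argument lies in the range of G. -/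
/-!
Compare `y` with `z τ = a τ + b + c ∫_{t₀}^τ g (y s) ds`, which dominates `y`, is nondecreasing
and satisfies `z τ₂ - z τ₁ ≤ (τ₂ - τ₁) (a + c g (z τ₂))`. As `1 / g` is antitone, the increment
of `G ∘ z` over `[τ₁, τ₂]` is then at most
`(τ₂ - τ₁) (a / g (z t₀) + c + c (g (z τ₂) - g (z τ₁)) / g (z t₀))`.
Since `g` may jump, the last term does not vanish as `τ₂ → τ₁`; but summed over the uniform
partition of `[t₀, t]` into `n` pieces it telescopes to
`c (t - t₀) (g (z t) - g (z t₀)) / (n g (z t₀))`, which tends to `0`.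
-/

open MeasureTheory Set Filter Topology

theorem sub_le_mul_sub_add_div_of_increment_le {F h : ℝ → ℝ} {K M t₀ t : ℝ} (ht : t₀ ≤ t)
    (hstep : ∀ τ₁ τ₂, t₀ ≤ τ₁ → τ₁ ≤ τ₂ → τ₂ ≤ t →
      F τ₂ - F τ₁ ≤ (τ₂ - τ₁) * (K + M * (h τ₂ - h τ₁)))
    {n : ℕ} (hn : 0 < n) :
    F t - F t₀ ≤ K * (t - t₀) + M * (t - t₀) * (h t - h t₀) / n := by
  set δ := (t - t₀) / n
  have hδ : 0 ≤ δ := div_nonneg (sub_nonneg.2 ht) n.cast_nonneg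
  set u : ℕ → ℝ := fun i => t₀ + i * δ
  have hu_mono : Monotone u := fun i j hij => by simp only [u]; gcongr
  have hu_zero : u 0 = t₀ := by simp [u]
  have hu_n : u n = t := by simp only [u, δ]; field_simp; ring
  have hu_succ : ∀ i, u (i + 1) - u i = δ := fun i => by simp only [u]; push_cast; ring
  calc F t - F t₀ = ∑ i ∈ Finset.range n, (F (u (i + 1)) - F (u i)) := by
        rw [Finset.sum_range_sub (fun i => F (u i)), hu_n, hu_zero]
    _ ≤ ∑ i ∈ Finset.range n, δ * (K + M * (h (u (i + 1)) - h (u i))) := by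
        refine Finset.sum_le_sum fun i hi => ?_
        rw [← hu_succ i]
        refine hstep _ _ (hu_zero ▸ hu_mono i.zero_le) (hu_mono i.le_succ) ?_
        exact hu_n ▸ hu_mono (Finset.mem_range.1 hi)
    _ = n * δ * K + δ * M * (h t - h t₀) := by
        rw [← Finset.mul_sum, Finset.sum_add_distrib, ← Finset.mul_sum,
          Finset.sum_range_sub (fun i => h (u i)), hu_n, hu_zero]
        simp only [Finset.sum_const, Finset.card_range, nsmul_eq_mul]
        ring
    _ = K * (t - t₀) + M * (t - t₀) * (h t - h t₀) / n := by
        simp only [δ]; field_simp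

theorem sub_le_mul_sub_of_increment_le {F h : ℝ → ℝ} {K M t₀ t : ℝ} (ht : t₀ ≤ t)
    (hstep : ∀ τ₁ τ₂, t₀ ≤ τ₁ → τ₁ ≤ τ₂ → τ₂ ≤ t →
      F τ₂ - F τ₁ ≤ (τ₂ - τ₁) * (K + M * (h τ₂ - h τ₁))) :
    F t - F t₀ ≤ K * (t - t₀) := by
  have hlim : Tendsto (fun n : ℕ => K * (t - t₀) + M * (t - t₀) * (h t - h t₀) / n) atTop
      (𝓝 (K * (t - t₀))) := by
    simpa using tendsto_const_nhds.add
      (tendsto_const_div_atTop_nhds_zero_nat (M * (t - t₀) * (h t - h t₀)))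
  exact ge_of_tendsto hlim <| (eventually_gt_atTop 0).mono fun n hn =>
    sub_le_mul_sub_add_div_of_increment_le ht hstep hn

theorem Monotone.intervalIntegrable_comp {g y : ℝ → ℝ} {a b : ℝ} (hg : Monotone g)
    (hy : ContinuousOn y (uIcc a b)) : IntervalIntegrable (fun s => g (y s)) volume a b := by
  obtain ⟨m, -, hm⟩ := isCompact_uIcc.exists_isMinOn nonempty_uIcc hy
  obtain ⟨M, -, hM⟩ := isCompact_uIcc.exists_isMaxOn nonempty_uIcc hy
  have hmeas : AEStronglyMeasurable (fun s => g (y s)) (volume.restrict (uIcc a b)) :=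
    (hg.measurable.comp_aemeasurable (hy.aemeasurable measurableSet_uIcc)).aestronglyMeasurable
  refine (IntegrableOn.of_bound isCompact_uIcc.measure_lt_top hmeas (max |g (y m)| |g (y M)|)
    ?_).intervalIntegrable
  exact ae_restrict_of_forall_mem measurableSet_uIcc fun s hs =>
    abs_le_max_abs_abs (hg (hm hs)) (hg (hM hs))

theorem MonotoneOn.intervalIntegrable_comp {g y : ℝ → ℝ} {a b m : ℝ} (hg : MonotoneOn g (Ici m))
    (hy : ContinuousOn y (uIcc a b)) (hym : ∀ s ∈ uIcc a b, m ≤ y s) :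
    IntervalIntegrable (fun s => g (y s)) volume a b := by
  have hext : Monotone fun x => g (max x m) := fun x x' hxx' =>
    hg (le_max_right x m) (le_max_right x' m) (max_le_max_right m hxx')
  refine (intervalIntegrable_congr fun s hs => ?_).1 (hext.intervalIntegrable_comp hy)
  simp only [max_eq_left (hym s (uIoc_subset_uIcc hs))]

theorem intervalIntegrable_one_div_of_monotoneOn {g : ℝ → ℝ} {s : Set ℝ} {u v : ℝ}
    (hg_mono : MonotoneOn g s) (hg_pos : ∀ x ∈ s, 0 < g x) (huv : uIcc u v ⊆ s) :
    IntervalIntegrable (fun x => 1 / g x) volume u v :=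
  AntitoneOn.intervalIntegrable fun _ hx _ hx' hxx' =>
    one_div_le_one_div_of_le (hg_pos _ (huv hx)) (hg_mono (huv hx) (huv hx') hxx')

theorem integral_one_div_sub_integral_one_div {g : ℝ → ℝ} {m η u v : ℝ}
    (hg_mono : MonotoneOn g (Ici m)) (hg_pos : ∀ x ∈ Ici m, 0 < g x) (hη : m ≤ η) (hu : m ≤ u)
    (hv : m ≤ v) : (∫ s in η..u, 1 / g s) - ∫ s in η..v, 1 / g s = ∫ s in v..u, 1 / g s :=
  intervalIntegral.integral_interval_sub_left
    (intervalIntegrable_one_div_of_monotoneOn hg_mono hg_pos (ordConnected_Ici.uIcc_subset hη hu))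
    (intervalIntegrable_one_div_of_monotoneOn hg_mono hg_pos (ordConnected_Ici.uIcc_subset hη hv))

theorem integral_one_div_mono {g : ℝ → ℝ} {m η u v : ℝ} (hg_mono : MonotoneOn g (Ici m))
    (hg_pos : ∀ x ∈ Ici m, 0 < g x) (hη : m ≤ η) (hu : m ≤ u) (huv : u ≤ v) :
    ∫ s in η..u, 1 / g s ≤ ∫ s in η..v, 1 / g s := by
  rw [← sub_nonneg, integral_one_div_sub_integral_one_div hg_mono hg_pos hη (hu.trans huv) hu]
  exact intervalIntegral.integral_nonneg huv fun s hs =>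
    (one_div_pos.2 (hg_pos s (hu.trans hs.1))).le

theorem integral_one_div_le_of_monotoneOn {g : ℝ → ℝ} {u v : ℝ} (huv : u ≤ v)
    (hg_mono : MonotoneOn g (Icc u v)) (hg_pos : 0 < g u) :
    ∫ s in u..v, 1 / g s ≤ (v - u) / g u := by
  have hpos : ∀ s ∈ Icc u v, 0 < g s := fun s hs =>
    hg_pos.trans_le (hg_mono (left_mem_Icc.2 huv) hs hs.1)
  have hint := intervalIntegrable_one_div_of_monotoneOn hg_mono hpos (uIcc_of_le huv).subset
  calc ∫ s in u..v, 1 / g s ≤ ∫ _ in u..v, 1 / g u :=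
        intervalIntegral.integral_mono_on huv hint intervalIntegrable_const fun s hs =>
          one_div_le_one_div_of_le hg_pos (hg_mono (left_mem_Icc.2 huv) hs hs.1)
    _ = (v - u) / g u := by rw [intervalIntegral.integral_const, smul_eq_mul, mul_one_div]

theorem integral_one_div_le_of_sub_le {g : ℝ → ℝ} {a c δ z₀ z₁ z₂ : ℝ} (ha : 0 ≤ a) (hc : 0 ≤ c)
    (hδ : 0 ≤ δ) (hg_mono : MonotoneOn g (Icc z₀ z₂)) (hg_pos : 0 < g z₀) (h₀₁ : z₀ ≤ z₁)
    (h₁₂ : z₁ ≤ z₂) (hinc : z₂ - z₁ ≤ δ * (a + c * g z₂)) :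
    ∫ s in z₁..z₂, 1 / g s ≤ δ * (a / g z₀ + c + c / g z₀ * (g z₂ - g z₁)) := by
  have hg₀₁ : g z₀ ≤ g z₁ := hg_mono (left_mem_Icc.2 (h₀₁.trans h₁₂)) ⟨h₀₁, h₁₂⟩ h₀₁
  have hg₁₂ : g z₁ ≤ g z₂ := hg_mono ⟨h₀₁, h₁₂⟩ (right_mem_Icc.2 (h₀₁.trans h₁₂)) h₁₂
  have hg₁ : 0 < g z₁ := hg_pos.trans_le hg₀₁
  calc ∫ s in z₁..z₂, 1 / g s ≤ (z₂ - z₁) / g z₁ :=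
        integral_one_div_le_of_monotoneOn h₁₂ (hg_mono.mono (Icc_subset_Icc_left h₀₁)) hg₁
    _ ≤ δ * (a + c * g z₂) / g z₁ := by gcongr
    _ = δ * (a / g z₁ + c + c / g z₁ * (g z₂ - g z₁)) := by field_simp; ring
    _ ≤ δ * (a / g z₀ + c + c / g z₀ * (g z₂ - g z₁)) := by
        have := sub_nonneg.2 hg₁₂
        gcongr

theorem integral_one_div_le_of_increment_le {g z : ℝ → ℝ} {a c t₀ t : ℝ} (ha : 0 ≤ a)
    (hc : 0 ≤ c) (hg_mono : MonotoneOn g (Ici (z t₀))) (hg_pos : 0 < g (z t₀))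
    (hz_mono : MonotoneOn z (Ici t₀))
    (hz_inc : ∀ τ₁ τ₂, t₀ ≤ τ₁ → τ₁ ≤ τ₂ → z τ₂ - z τ₁ ≤ (τ₂ - τ₁) * (a + c * g (z τ₂)))
    (ht : t₀ ≤ t) :
    ∫ s in z t₀..z t, 1 / g s ≤ (a / g (z t₀) + c) * (t - t₀) := by
  have hz₀ : ∀ τ ∈ Ici t₀, z t₀ ≤ z τ := fun τ hτ => hz_mono self_mem_Ici hτ hτ
  have hg_pos' : ∀ x ∈ Ici (z t₀), 0 < g x := fun x hx =>
    hg_pos.trans_le (hg_mono self_mem_Ici hx hx)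
  have := sub_le_mul_sub_of_increment_le (F := fun τ => ∫ s in z t₀..z τ, 1 / g s)
    (h := fun τ => g (z τ)) (M := c / g (z t₀)) ht fun τ₁ τ₂ h₁ h₁₂ _ => by
      have h₂ := h₁.trans h₁₂
      rw [integral_one_div_sub_integral_one_div hg_mono hg_pos' le_rfl (hz₀ τ₂ h₂) (hz₀ τ₁ h₁)]
      exact integral_one_div_le_of_sub_le ha hc (sub_nonneg.2 h₁₂)
        (hg_mono.mono Icc_subset_Ici_self) hg_pos (hz₀ τ₁ h₁) (hz_mono h₁ h₂ h₁₂)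
        (hz_inc τ₁ τ₂ h₁ h₁₂)
  simpa using this

theorem affine_add_integral_sub {f : ℝ → ℝ} {a b c t₀ τ₁ τ₂ : ℝ}
    (h₁ : IntervalIntegrable f volume t₀ τ₁) (h₂ : IntervalIntegrable f volume t₀ τ₂) :
    (a * τ₂ + b + c * ∫ s in t₀..τ₂, f s) - (a * τ₁ + b + c * ∫ s in t₀..τ₁, f s) =
      a * (τ₂ - τ₁) + c * ∫ s in τ₁..τ₂, f s := by
  rw [← intervalIntegral.integral_interval_sub_left h₂ h₁]
  ring

theorem monotoneOn_affine_add_integral {f : ℝ → ℝ} {a b c t₀ : ℝ} (ha : 0 ≤ a) (hc : 0 ≤ c)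
    (hf_int : ∀ τ ∈ Ici t₀, IntervalIntegrable f volume t₀ τ)
    (hf_nonneg : ∀ s ∈ Ici t₀, 0 ≤ f s) :
    MonotoneOn (fun τ => a * τ + b + c * ∫ s in t₀..τ, f s) (Ici t₀) := by
  intro τ₁ h₁ τ₂ h₂ h₁₂
  have hsub := affine_add_integral_sub (a := a) (b := b) (c := c) (hf_int τ₁ h₁) (hf_int τ₂ h₂)
  have hint : 0 ≤ ∫ s in τ₁..τ₂, f s :=
    intervalIntegral.integral_nonneg h₁₂ fun s hs => hf_nonneg s (h₁.trans hs.1)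
  linarith [mul_nonneg ha (sub_nonneg.2 h₁₂), mul_nonneg hc hint]

theorem affine_add_integral_sub_le {f : ℝ → ℝ} {a b c t₀ τ₁ τ₂ B : ℝ} (hc : 0 ≤ c)
    (h₁ : t₀ ≤ τ₁) (h₁₂ : τ₁ ≤ τ₂) (hf_int : ∀ τ ∈ Ici t₀, IntervalIntegrable f volume t₀ τ)
    (hfB : ∀ s ∈ Icc τ₁ τ₂, f s ≤ B) :
    (a * τ₂ + b + c * ∫ s in t₀..τ₂, f s) - (a * τ₁ + b + c * ∫ s in t₀..τ₁, f s) ≤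
      (τ₂ - τ₁) * (a + c * B) := by
  have hle : ∫ s in τ₁..τ₂, f s ≤ (τ₂ - τ₁) * B := by
    simpa using intervalIntegral.integral_mono_on h₁₂
      ((hf_int τ₁ h₁).symm.trans (hf_int τ₂ (h₁.trans h₁₂))) intervalIntegrable_const hfB
  rw [affine_add_integral_sub (hf_int τ₁ h₁) (hf_int τ₂ (h₁.trans h₁₂))]
  linarith [mul_le_mul_of_nonneg_left hle hc]

theorem nonlinear_gronwall_general
    (t₀ a b c η : ℝ) (ha : 0 < a) (hc : 0 < c) (hη : 0 < η)
    (y g : ℝ → ℝ)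
    (hy_cont : ContinuousOn y (Set.Ici t₀))
    (hy_nonneg : ∀ t ∈ Set.Ici t₀, 0 ≤ y t)
    (hg_pos : ∀ s ∈ Set.Ici (0:ℝ), 0 < g s)
    (hg_mono : MonotoneOn g (Set.Ici (0:ℝ)))
    (hineq : ∀ t ∈ Set.Ici t₀, y t ≤ a * t + b + c * ∫ s in t₀..t, g (y s))
    (G : ℝ → ℝ) (hG : ∀ u, G u = ∫ s in η..u, 1 / g s) :
    ∀ t ∈ Set.Ici t₀,
      G (y t) ≤ G (a * t₀ + b) + (a / g (a * t₀ + b) + c) * (t - t₀) := by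
  intro t ht
  set z : ℝ → ℝ := fun τ => a * τ + b + c * ∫ s in t₀..τ, g (y s)
  have hgy_int : ∀ τ ∈ Ici t₀, IntervalIntegrable (fun s => g (y s)) volume t₀ τ := fun τ hτ =>
    have hsub := ordConnected_Ici.uIcc_subset self_mem_Ici hτ
    hg_mono.intervalIntegrable_comp (hy_cont.mono hsub) fun s hs => hy_nonneg s (hsub hs)
  have hz_mono : MonotoneOn z (Ici t₀) := monotoneOn_affine_add_integral ha.le hc.le hgy_int
    fun s hs => (hg_pos _ (hy_nonneg s hs)).le
  have hz_nonneg : ∀ τ ∈ Ici t₀, 0 ≤ z τ := fun τ hτ => (hy_nonneg τ hτ).trans (hineq τ hτ)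
  have hz_inc : ∀ τ₁ τ₂, t₀ ≤ τ₁ → τ₁ ≤ τ₂ → z τ₂ - z τ₁ ≤ (τ₂ - τ₁) * (a + c * g (z τ₂)) :=
    fun τ₁ τ₂ h₁ h₁₂ => affine_add_integral_sub_le hc.le h₁ h₁₂ hgy_int fun s hs =>
      have hs₀ : s ∈ Ici t₀ := h₁.trans hs.1
      hg_mono (hy_nonneg s hs₀) (hz_nonneg τ₂ (h₁.trans h₁₂))
        ((hineq s hs₀).trans (hz_mono hs₀ (h₁.trans h₁₂) hs.2))
  have hz₀ : 0 ≤ z t₀ := hz_nonneg t₀ self_mem_Ici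
  calc G (y t) ≤ G (z t) := by
        simpa only [hG] using
          integral_one_div_mono hg_mono hg_pos hη.le (hy_nonneg t ht) (hineq t ht)
    _ = G (z t₀) + ∫ s in z t₀..z t, 1 / g s := by
        rw [hG, hG,
          ← integral_one_div_sub_integral_one_div hg_mono hg_pos hη.le (hz_nonneg t ht) hz₀]
        ring
    _ ≤ G (z t₀) + (a / g (z t₀) + c) * (t - t₀) := by
        gcongr
        exact integral_one_div_le_of_increment_le ha.le hc.le
          (hg_mono.mono (Ici_subset_Ici.2 hz₀)) (hg_pos _ hz₀) hz_mono hz_inc ht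
    _ = G (a * t₀ + b) + (a / g (a * t₀ + b) + c) * (t - t₀) := by simp [z]

/-- Nonlinear Grönwall-type inequality: if a nonnegative continuous `y` satisfies
`y t ≤ a*t + b + c*∫_{t₀}^t g(y s) ds` for all `t ≥ t₀`, with `g` positive and
nondecreasing on `[0,∞)`, then with `G u = ∫_η^u ds / g s` one has
`G (y t) ≤ G (a*t₀ + b) + (a / g (a*t₀ + b) + c) * (t - t₀)` for all `t ≥ t₀`. -/
theorem nonlinear_gronwall
    (t₀ a b c η : ℝ) (ht₀ : 0 ≤ t₀) (ha : 0 < a) (hb : 0 < b) (hc : 0 < c) (hη : 0 < η)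
    (y g : ℝ → ℝ)
    (hy_cont : ContinuousOn y (Set.Ici t₀))
    (hy_nonneg : ∀ t ∈ Set.Ici t₀, 0 ≤ y t)
    (hg_pos : ∀ s ∈ Set.Ici (0:ℝ), 0 < g s)
    (hg_mono : MonotoneOn g (Set.Ici (0:ℝ)))
    (hineq : ∀ t ∈ Set.Ici t₀, y t ≤ a * t + b + c * ∫ s in t₀..t, g (y s))
    (G : ℝ → ℝ) (hG : ∀ u, G u = ∫ s in η..u, 1 / g s) :
    ∀ t ∈ Set.Ici t₀,
      G (y t) ≤ G (a * t₀ + b) + (a / g (a * t₀ + b) + c) * (t - t₀) :=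
  nonlinear_gronwall_general t₀ a b c η ha hc hη y g hy_cont hy_nonneg hg_pos hg_mono hineq G hG
end

section
/- Let h be a classical periodic solution of the regularized Model I equation on [0,T]. Then the function E(t) = (1/2)·∫_{−a}^{a} ( h(x,t)² + h_x(x,t)² ) dx is differentiable on [0,T] and satisfies, for every t ∈ [0,T], E′(t) + S·∫_{−a}^{a} (|h|³ + ε)·h_xxx² dx = −(1/2)·∫_{−a}^{a} h²·h_xxx dx + S·∫_{−a}^{a} (|h|³ + ε)·h_x² dx. -/
/-!
Since `h_x` is not assumed differentiable in time, the energy is not differentiated under the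
integral sign directly. Integrating by parts (boundary terms cancel by periodicity) gives
`E(t) - E(t₀) = ½ ∫ (h(t) - h(t₀)) (h(t) + h(t₀) - h_xx(t) - h_xx(t₀))`, and dominated
convergence, with a mean-value bound on the difference quotient of `h`, yields
`E'(t₀) = ∫ h_t (h - h_xx)`. Substituting `h_t = -h h_x - ∂_x F` with
`F = S (|h|³ + ε)(h_x + h_xxx)` and integrating by parts once more turns this into
`∫ F (h_x - h_xxx) - ∫ h² h_x + ∫ h h_x h_xx`, where `∫ h² h_x = 0` and
`∫ h h_x h_xx = -½ ∫ h² h_xxx`.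
-/

/-- A classical periodic solution of the regularized Model I equation
`h_t = -h h_x - S ∂_x[(|h|³+ε)(h_x+h_xxx)]` on `ℝ × [0,T]`, `2a`-periodic in `x`,
with continuous partial derivatives `∂_x^j h`, `0 ≤ j ≤ 4`, and `∂_t h`. -/
structure ClassicalSolutionI (a S ε T : ℝ) (h hx hxx hxxx hxxxx ht : ℝ → ℝ → ℝ) : Prop where
  periodic_x : ∀ x t, h (x + 2 * a) t = h x t
  cont_h : ContinuousOn (fun p : ℝ × ℝ => h p.1 p.2) (Set.univ ×ˢ Set.Icc 0 T)
  cont_hx : ContinuousOn (fun p : ℝ × ℝ => hx p.1 p.2) (Set.univ ×ˢ Set.Icc 0 T)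
  cont_hxx : ContinuousOn (fun p : ℝ × ℝ => hxx p.1 p.2) (Set.univ ×ˢ Set.Icc 0 T)
  cont_hxxx : ContinuousOn (fun p : ℝ × ℝ => hxxx p.1 p.2) (Set.univ ×ˢ Set.Icc 0 T)
  cont_hxxxx : ContinuousOn (fun p : ℝ × ℝ => hxxxx p.1 p.2) (Set.univ ×ˢ Set.Icc 0 T)
  cont_ht : ContinuousOn (fun p : ℝ × ℝ => ht p.1 p.2) (Set.univ ×ˢ Set.Icc 0 T)
  deriv_hx : ∀ x : ℝ, ∀ t ∈ Set.Icc (0:ℝ) T, HasDerivAt (fun y => h y t) (hx x t) x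
  deriv_hxx : ∀ x : ℝ, ∀ t ∈ Set.Icc (0:ℝ) T, HasDerivAt (fun y => hx y t) (hxx x t) x
  deriv_hxxx : ∀ x : ℝ, ∀ t ∈ Set.Icc (0:ℝ) T, HasDerivAt (fun y => hxx y t) (hxxx x t) x
  deriv_hxxxx : ∀ x : ℝ, ∀ t ∈ Set.Icc (0:ℝ) T, HasDerivAt (fun y => hxxx y t) (hxxxx x t) x
  deriv_ht : ∀ x : ℝ, ∀ t ∈ Set.Icc (0:ℝ) T,
    HasDerivWithinAt (fun s => h x s) (ht x t) (Set.Icc 0 T) t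
  /-- The PDE `h_t = -h h_x - S ∂_x[(|h|³+ε)(h_x+h_xxx)]`, stated as: the flux
  `S (|h|³+ε)(h_x+h_xxx)` has spatial derivative `-h_t - h h_x`. -/
  pde : ∀ x : ℝ, ∀ t ∈ Set.Icc (0:ℝ) T,
    HasDerivAt (fun y => S * ((|h y t| ^ 3 + ε) * (hx y t + hxxx y t)))
      (-(ht x t) - h x t * hx x t) x

open MeasureTheory intervalIntegral Set Function

theorem Function.Periodic.hasDerivAt_periodic {f f' : ℝ → ℝ} {c : ℝ} (hf : Periodic f c)
    (hd : ∀ x, HasDerivAt f (f' x) x) : Periodic f' c := fun x => by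
  rw [← (hd _).deriv, ← (hd x).deriv, ← deriv_comp_add_const,
    show (fun y => f (y + c)) = f from funext hf]

theorem Function.Periodic.apply_neg_eq {α : Type*} {f : ℝ → α} {a : ℝ}
    (hf : Periodic f (2 * a)) : f (-a) = f a := by
  simpa [two_mul] using (hf (-a)).symm

theorem continuous_of_continuousOn_univ_prod {f : ℝ → ℝ → ℝ} {s : Set ℝ}
    (hf : ContinuousOn (uncurry f) (univ ×ˢ s)) {t : ℝ} (ht : t ∈ s) : Continuous (f · t) :=
  hf.comp_continuous (continuous_id.prodMk continuous_const) fun _ => ⟨trivial, ht⟩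

theorem abs_slope_le_of_abs_hasDerivWithinAt_le {f f' : ℝ → ℝ} {s : Set ℝ} {C x y : ℝ}
    (hs : Convex ℝ s) (hf : ∀ t ∈ s, HasDerivWithinAt f (f' t) s t) (hC : ∀ t ∈ s, |f' t| ≤ C)
    (hx : x ∈ s) (hy : y ∈ s) : |slope f x y| ≤ C := by
  have hC₀ : 0 ≤ C := (abs_nonneg _).trans (hC x hx)
  have hmvt := hs.norm_image_sub_le_of_norm_hasDerivWithin_le hf hC hx hy
  rw [Real.norm_eq_abs, Real.norm_eq_abs] at hmvt
  rw [slope_def_field, abs_div]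
  exact div_le_of_le_mul₀ (abs_nonneg _) hC₀ hmvt

theorem hasDerivWithinAt_integral_sub_mul {f f' g : ℝ → ℝ → ℝ} {s : Set ℝ} {a b t₀ : ℝ}
    (hs : IsCompact s) (hs' : Convex ℝ s) (ht₀ : t₀ ∈ s)
    (hf : ContinuousOn (uncurry f) (uIcc a b ×ˢ s))
    (hf' : ContinuousOn (uncurry f') (uIcc a b ×ˢ s))
    (hg : ContinuousOn (uncurry g) (uIcc a b ×ˢ s))
    (hderiv : ∀ x ∈ uIcc a b, ∀ t ∈ s, HasDerivWithinAt (f x) (f' x t) s t) :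
    HasDerivWithinAt (fun t => ∫ x in a..b, (f x t - f x t₀) * g x t)
      (∫ x in a..b, f' x t₀ * g x t₀) s t₀ := by
  have hK : IsCompact (uIcc a b ×ˢ s) := isCompact_uIcc.prod hs
  obtain ⟨C, hC⟩ := hK.exists_bound_of_continuousOn hf'
  obtain ⟨D, hD⟩ := hK.exists_bound_of_continuousOn hg
  have slice_left : ∀ {φ : ℝ → ℝ → ℝ}, ContinuousOn (uncurry φ) (uIcc a b ×ˢ s) →
      ∀ t ∈ s, ContinuousOn (φ · t) (uIcc a b) := fun hφ t ht =>
    hφ.comp (continuousOn_id.prodMk continuousOn_const) fun x hx => ⟨hx, ht⟩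
  have slice_right : ∀ {φ : ℝ → ℝ → ℝ}, ContinuousOn (uncurry φ) (uIcc a b ×ˢ s) →
      ∀ x ∈ uIcc a b, ContinuousOn (φ x) s := fun hφ x hx =>
    hφ.comp (continuousOn_const.prodMk continuousOn_id) fun t ht => ⟨hx, ht⟩
  rw [hasDerivWithinAt_iff_tendsto_slope]
  have hslope : slope (fun t => ∫ x in a..b, (f x t - f x t₀) * g x t) t₀
      = fun t => ∫ x in a..b, slope (f x) t₀ t * g x t := by
    funext t
    simp only [slope_def_field, sub_self, zero_mul, intervalIntegral.integral_zero, sub_zero,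
      div_eq_inv_mul, ← intervalIntegral.integral_const_mul, mul_assoc]
  rw [hslope]
  refine tendsto_integral_filter_of_dominated_convergence (fun _ => C * D) ?_ ?_
    intervalIntegrable_const ?_
  · filter_upwards [self_mem_nhdsWithin] with t ht
    have hcont : ContinuousOn (fun x => slope (f x) t₀ t * g x t) (uIcc a b) :=
      (continuousOn_const.mul ((slice_left hf t ht.1).sub (slice_left hf t₀ ht₀))).mul
        (slice_left hg t ht.1)
    exact (hcont.mono uIoc_subset_uIcc).aestronglyMeasurable measurableSet_uIoc
  · filter_upwards [self_mem_nhdsWithin] with t ht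
    refine ae_of_all _ fun x hx => ?_
    have hx' : x ∈ uIcc a b := uIoc_subset_uIcc hx
    rw [Real.norm_eq_abs, abs_mul]
    exact mul_le_mul (abs_slope_le_of_abs_hasDerivWithinAt_le hs' (hderiv x hx')
      (fun t ht => hC (x, t) ⟨hx', ht⟩) ht₀ ht.1) (hD (x, t) ⟨hx', ht.1⟩) (abs_nonneg _)
      ((abs_nonneg _).trans (hC (x, t₀) ⟨hx', ht₀⟩))
  · refine ae_of_all _ fun x hx => ?_
    have hx' : x ∈ uIcc a b := uIoc_subset_uIcc hx
    exact (hasDerivWithinAt_iff_tendsto_slope.1 (hderiv x hx' t₀ ht₀)).mul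
      (((slice_right hg x hx' t₀ ht₀).tendsto).mono_left (nhdsWithin_mono _ sdiff_subset))

theorem integral_eq_zero_of_hasDerivAt_of_eq {f f' : ℝ → ℝ} {a b : ℝ}
    (hf : ∀ x ∈ uIcc a b, HasDerivAt f (f' x) x) (hf' : IntervalIntegrable f' volume a b)
    (hab : f a = f b) : ∫ x in a..b, f' x = 0 := by
  rw [integral_eq_sub_of_hasDerivAt hf hf', hab, sub_self]

theorem integral_sq_add_sq_sub_eq {u u₁ u₂ v v₁ v₂ : ℝ → ℝ} {a b : ℝ}
    (hu : ∀ x, HasDerivAt u (u₁ x) x) (hu₁ : ∀ x, HasDerivAt u₁ (u₂ x) x)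
    (hv : ∀ x, HasDerivAt v (v₁ x) x) (hv₁ : ∀ x, HasDerivAt v₁ (v₂ x) x)
    (hu₂ : Continuous u₂) (hv₂ : Continuous v₂)
    (hua : u a = u b) (hu₁a : u₁ a = u₁ b) (hva : v a = v b) (hv₁a : v₁ a = v₁ b) :
    (∫ x in a..b, (u x ^ 2 + u₁ x ^ 2)) - ∫ x in a..b, (v x ^ 2 + v₁ x ^ 2)
      = ∫ x in a..b, (u x - v x) * (u x + v x - u₂ x - v₂ x) := by
  have hcu : Continuous u := continuous_iff_continuousAt.2 fun x => (hu x).continuousAt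
  have hcu₁ : Continuous u₁ := continuous_iff_continuousAt.2 fun x => (hu₁ x).continuousAt
  have hcv : Continuous v := continuous_iff_continuousAt.2 fun x => (hv x).continuousAt
  have hcv₁ : Continuous v₁ := continuous_iff_continuousAt.2 fun x => (hv₁ x).continuousAt
  have hii : ∀ {φ : ℝ → ℝ}, Continuous φ → IntervalIntegrable φ volume a b :=
    fun hφ => hφ.intervalIntegrable _ _
  -- `(u₁ - v₁) (u₁ + v₁)` integrates by parts against `(u - v) (u₂ + v₂)`.
  have hderiv_zero : ∫ x in a..b,
      ((u₁ x - v₁ x) * (u₁ x + v₁ x) + (u x - v x) * (u₂ x + v₂ x)) = 0 :=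
    integral_eq_zero_of_hasDerivAt_of_eq
      (fun x _ => ((hu x).fun_sub (hv x)).fun_mul ((hu₁ x).fun_add (hv₁ x)))
      (hii (by fun_prop)) (by simp only [hua, hu₁a, hva, hv₁a])
  rw [← integral_sub (hii (by fun_prop)) (hii (by fun_prop)), ← sub_eq_zero,
    ← integral_sub (hii (by fun_prop)) (hii (by fun_prop)), ← hderiv_zero]
  exact integral_congr fun x _ => by ring

theorem integral_mul_sub_eq_of_hasDerivAt_flux {u u₁ u₂ u₃ w : ℝ → ℝ} {a b S ε : ℝ}
    (hu : ∀ x, HasDerivAt u (u₁ x) x) (hu₁ : Continuous u₁)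
    (hu₂ : ∀ x, HasDerivAt u₂ (u₃ x) x) (hu₃ : Continuous u₃) (hw : Continuous w)
    (hflux : ∀ x, HasDerivAt (fun y => S * ((|u y| ^ 3 + ε) * (u₁ y + u₃ y)))
      (-w x - u x * u₁ x) x)
    (hua : u a = u b) (hu₁a : u₁ a = u₁ b) (hu₂a : u₂ a = u₂ b) (hu₃a : u₃ a = u₃ b) :
    ∫ x in a..b, w x * (u x - u₂ x) =
      -(S * ∫ x in a..b, (|u x| ^ 3 + ε) * u₃ x ^ 2) - 1 / 2 * (∫ x in a..b, u x ^ 2 * u₃ x)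
        + S * ∫ x in a..b, (|u x| ^ 3 + ε) * u₁ x ^ 2 := by
  have hcu : Continuous u := continuous_iff_continuousAt.2 fun x => (hu x).continuousAt
  have hcu₂ : Continuous u₂ := continuous_iff_continuousAt.2 fun x => (hu₂ x).continuousAt
  have hii : ∀ {φ : ℝ → ℝ}, Continuous φ → IntervalIntegrable φ volume a b :=
    fun hφ => hφ.intervalIntegrable _ _
  -- The difference of the two sides is the derivative of a function with equal values at `a`, `b`.
  have hderiv_zero : ∫ x in a..b, (w x * (u x - u₂ x) + S * ((|u x| ^ 3 + ε) * u₃ x ^ 2)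
      + 1 / 2 * (u x ^ 2 * u₃ x) - S * ((|u x| ^ 3 + ε) * u₁ x ^ 2)) = 0 := by
    refine integral_eq_zero_of_hasDerivAt_of_eq
      (f := fun y => -((u y - u₂ y) * (S * ((|u y| ^ 3 + ε) * (u₁ y + u₃ y))))
        - u y ^ 3 / 3 + u y ^ 2 * u₂ y / 2) (fun x _ => ?_) (hii (by fun_prop))
      (by simp only [hua, hu₁a, hu₂a, hu₃a])
    refine (((((hu x).fun_sub (hu₂ x)).fun_mul (hflux x)).fun_neg.fun_sub
      (((hu x).fun_pow 3).div_const 3)).fun_add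
      ((((hu x).fun_pow 2).fun_mul (hu₂ x)).div_const 2)).congr_deriv ?_
    push_cast
    ring
  rw [← intervalIntegral.integral_const_mul, ← intervalIntegral.integral_const_mul,
    ← intervalIntegral.integral_const_mul, ← intervalIntegral.integral_neg,
    ← integral_sub (hii (by fun_prop)) (hii (by fun_prop)),
    ← integral_add (hii (by fun_prop)) (hii (by fun_prop)), ← sub_eq_zero,
    ← integral_sub (hii (by fun_prop)) (hii (by fun_prop)), ← hderiv_zero]
  exact integral_congr fun x _ => by ring

namespace ClassicalSolutionI

variable {a S ε T : ℝ} {h hx hxx hxxx hxxxx ht : ℝ → ℝ → ℝ}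

theorem periodic_h (hsol : ClassicalSolutionI a S ε T h hx hxx hxxx hxxxx ht) (t : ℝ) :
    Periodic (h · t) (2 * a) :=
  fun x => hsol.periodic_x x t

theorem periodic_hx (hsol : ClassicalSolutionI a S ε T h hx hxx hxxx hxxxx ht) {t : ℝ}
    (htT : t ∈ Icc 0 T) : Periodic (hx · t) (2 * a) :=
  (hsol.periodic_h t).hasDerivAt_periodic fun x => hsol.deriv_hx x t htT

theorem periodic_hxx (hsol : ClassicalSolutionI a S ε T h hx hxx hxxx hxxxx ht) {t : ℝ}
    (htT : t ∈ Icc 0 T) : Periodic (hxx · t) (2 * a) :=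
  (hsol.periodic_hx htT).hasDerivAt_periodic fun x => hsol.deriv_hxx x t htT

theorem periodic_hxxx (hsol : ClassicalSolutionI a S ε T h hx hxx hxxx hxxxx ht) {t : ℝ}
    (htT : t ∈ Icc 0 T) : Periodic (hxxx · t) (2 * a) :=
  (hsol.periodic_hxx htT).hasDerivAt_periodic fun x => hsol.deriv_hxxx x t htT

theorem hasDerivWithinAt_energy (hsol : ClassicalSolutionI a S ε T h hx hxx hxxx hxxxx ht)
    {t₀ : ℝ} (ht₀ : t₀ ∈ Icc 0 T) :
    HasDerivWithinAt (fun s => (1/2) * ∫ x in (-a)..a, ((h x s)^2 + (hx x s)^2))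
      (∫ x in (-a)..a, ht x t₀ * (h x t₀ - hxx x t₀)) (Icc 0 T) t₀ := by
  have hsub : (uIcc (-a) a ×ˢ Icc 0 T : Set (ℝ × ℝ)) ⊆ univ ×ˢ Icc 0 T :=
    prod_mono (subset_univ _) subset_rfl
  have hat_t₀ : ∀ {f : ℝ → ℝ → ℝ}, ContinuousOn (uncurry f) (univ ×ˢ Icc 0 T) →
      ContinuousOn (fun p : ℝ × ℝ => f p.1 t₀) (uIcc (-a) a ×ˢ Icc 0 T) := fun hf =>
    ((continuous_of_continuousOn_univ_prod hf ht₀).comp continuous_fst).continuousOn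
  -- After integrating by parts, the energy difference involves the time increment of `h` only.
  have hΦ := hasDerivWithinAt_integral_sub_mul
    (g := fun x t => h x t + h x t₀ - hxx x t - hxx x t₀) isCompact_Icc (convex_Icc 0 T) ht₀
    (hsol.cont_h.mono hsub) (hsol.cont_ht.mono hsub)
    ((((hsol.cont_h.mono hsub).add (hat_t₀ hsol.cont_h)).sub
      (hsol.cont_hxx.mono hsub)).sub (hat_t₀ hsol.cont_hxx))
    (fun x _ t htT => hsol.deriv_ht x t htT)
  have henergy : ∀ t ∈ Icc 0 T, (1/2) * ∫ x in (-a)..a, ((h x t)^2 + (hx x t)^2)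
      = (1/2) * (∫ x in (-a)..a, ((h x t₀)^2 + (hx x t₀)^2)) + (1/2) * ∫ x in (-a)..a,
          (h x t - h x t₀) * (h x t + h x t₀ - hxx x t - hxx x t₀) := by
    intro t htT
    rw [← integral_sq_add_sq_sub_eq (fun x => hsol.deriv_hx x t htT)
      (fun x => hsol.deriv_hxx x t htT) (fun x => hsol.deriv_hx x t₀ ht₀)
      (fun x => hsol.deriv_hxx x t₀ ht₀) (continuous_of_continuousOn_univ_prod hsol.cont_hxx htT)
      (continuous_of_continuousOn_univ_prod hsol.cont_hxx ht₀)
      (hsol.periodic_h t).apply_neg_eq (hsol.periodic_hx htT).apply_neg_eq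
      (hsol.periodic_h t₀).apply_neg_eq (hsol.periodic_hx ht₀).apply_neg_eq]
    ring
  refine (((hΦ.const_mul (1/2)).const_add _).congr_of_mem henergy ht₀).congr_deriv ?_
  rw [← intervalIntegral.integral_const_mul]
  exact integral_congr fun x _ => by ring

end ClassicalSolutionI

theorem modelI_energy_identity_general
    (a S ε T : ℝ)
    (h hx hxx hxxx hxxxx ht : ℝ → ℝ → ℝ)
    (hsol : ClassicalSolutionI a S ε T h hx hxx hxxx hxxxx ht) :
    ∀ t ∈ Set.Icc (0:ℝ) T,
      HasDerivWithinAt (fun s => (1/2) * ∫ x in (-a)..a, ((h x s)^2 + (hx x s)^2))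
        (-(S * ∫ x in (-a)..a, (|h x t| ^ 3 + ε) * (hxxx x t)^2)
          - (1/2) * (∫ x in (-a)..a, (h x t)^2 * hxxx x t)
          + S * ∫ x in (-a)..a, (|h x t| ^ 3 + ε) * (hx x t)^2)
        (Set.Icc 0 T) t := by
  intro t htT
  rw [← integral_mul_sub_eq_of_hasDerivAt_flux (fun x => hsol.deriv_hx x t htT)
    (continuous_of_continuousOn_univ_prod hsol.cont_hx htT) (fun x => hsol.deriv_hxxx x t htT)
    (continuous_of_continuousOn_univ_prod hsol.cont_hxxx htT)
    (continuous_of_continuousOn_univ_prod hsol.cont_ht htT) (fun x => hsol.pde x t htT)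
    (hsol.periodic_h t).apply_neg_eq
    (hsol.periodic_hx htT).apply_neg_eq (hsol.periodic_hxx htT).apply_neg_eq
    (hsol.periodic_hxxx htT).apply_neg_eq]
  exact hsol.hasDerivWithinAt_energy htT

/-- Energy identity for regularized Model I: with
`E t = (1/2)∫ (h² + h_x²) dx`, one has
`E' + S∫(|h|³+ε)h_xxx² = -(1/2)∫ h² h_xxx + S∫(|h|³+ε)h_x²`. -/
theorem modelI_energy_identity
    (a S ε T : ℝ) (ha : 0 < a) (hS : 0 < S) (hε : 0 < ε) (hT : 0 < T)
    (h hx hxx hxxx hxxxx ht : ℝ → ℝ → ℝ)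
    (hsol : ClassicalSolutionI a S ε T h hx hxx hxxx hxxxx ht) :
    ∀ t ∈ Set.Icc (0:ℝ) T,
      HasDerivWithinAt (fun s => (1/2) * ∫ x in (-a)..a, ((h x s)^2 + (hx x s)^2))
        (-(S * ∫ x in (-a)..a, (|h x t| ^ 3 + ε) * (hxxx x t)^2)
          - (1/2) * (∫ x in (-a)..a, (h x t)^2 * hxxx x t)
          + S * ∫ x in (-a)..a, (|h x t| ^ 3 + ε) * (hx x t)^2)
        (Set.Icc 0 T) t :=
  modelI_energy_identity_general a S ε T h hx hxx hxxx hxxxx ht hsol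
end

section
/- There exists a constant C > 0 depending only on S and a such that the following holds for every ε ∈ (0,1]: if h is a classical periodic solution of the regularized Model I equation on [0,T] and V(t) := max( 1, ∫_{−a}^{a} ( h(x,t)² + h_x(x,t)² ) dx ), then V(t) ≤ ( V(0)^{−3/2} − (3/2)·C·t )^{−2/3} for all 0 ≤ t < min( T, (2/(3C))·V(0)^{−3/2} ); in particular, ∫_{−a}^{a} ( h(x,t)² + h_x(x,t)² ) dx ≤ 2^{2/3}·max( 1, ∫_{−a}^{a} ( h(x,0)² + h_x(x,0)² ) dx ) for all 0 ≤ t ≤ min( T, (1/(3C))·V(0)^{−3/2} ). -/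
open Set Filter Topology MeasureTheory intervalIntegral Function

theorem continuous_of_continuousOn_univ_prod_s4 {f : ℝ → ℝ → ℝ} {K : Set ℝ}
    (hf : ContinuousOn (fun p : ℝ × ℝ => f p.1 p.2) (univ ×ˢ K)) {t : ℝ} (ht : t ∈ K) :
    Continuous fun x => f x t :=
  hf.comp_continuous (continuous_id.prodMk continuous_const) fun _ => ⟨trivial, ht⟩

theorem continuousOn_of_continuousOn_univ_prod {f : ℝ → ℝ → ℝ} {K : Set ℝ}
    (hf : ContinuousOn (fun p : ℝ × ℝ => f p.1 p.2) (univ ×ˢ K)) (x : ℝ) : ContinuousOn (f x) K :=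
  hf.comp (continuous_const.prodMk continuous_id).continuousOn fun _ hs => ⟨trivial, hs⟩

theorem exists_abs_le_of_continuousOn_univ_prod {f : ℝ → ℝ → ℝ} {K : Set ℝ} (hK : IsCompact K)
    (hf : ContinuousOn (fun p : ℝ × ℝ => f p.1 p.2) (univ ×ˢ K)) (α β : ℝ) :
    ∃ M, ∀ x ∈ uIcc α β, ∀ s ∈ K, |f x s| ≤ M := by
  obtain ⟨M, hM⟩ := (isCompact_uIcc.prod hK).exists_bound_of_continuousOn
    (hf.mono (prod_mono (subset_univ _) subset_rfl))
  exact ⟨M, fun x hx s hs => hM (x, s) ⟨hx, hs⟩⟩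

theorem Function.Periodic.of_hasDerivAt {f g : ℝ → ℝ} {c : ℝ} (hf : Periodic f c)
    (hd : ∀ x, HasDerivAt f (g x) x) : Periodic g c := fun x => by
  have hshift : HasDerivAt (fun y => f (y + c)) (g (x + c)) x := by
    simpa using (hd (x + c)).comp_add_const x c
  exact hshift.unique (by simpa only [hf.funext] using hd x)

theorem integral_eq_zero_of_hasDerivAt_of_periodic {F f : ℝ → ℝ} {a : ℝ}
    (hF : Periodic F (2 * a)) (hd : ∀ x, HasDerivAt F (f x) x)
    (hf : IntervalIntegrable f volume (-a) a) : ∫ x in (-a)..a, f x = 0 := by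
  rw [integral_eq_sub_of_hasDerivAt (fun x _ => hd x) hf, sub_eq_zero]
  simpa [two_mul] using hF (-a)

theorem hasDerivWithinAt_integral_sub_mul_s4 {u u' w : ℝ → ℝ → ℝ} {K : Set ℝ} {α β t M N : ℝ}
    (hK : Convex ℝ K) (ht : t ∈ K)
    (hu : ∀ x ∈ uIcc α β, ∀ s ∈ K, HasDerivWithinAt (u x) (u' x s) K s)
    (hu' : ∀ x ∈ uIcc α β, ∀ s ∈ K, |u' x s| ≤ M)
    (hw : ∀ x ∈ uIcc α β, ∀ s ∈ K, |w x s| ≤ N)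
    (hwt : ∀ x ∈ uIcc α β, ContinuousWithinAt (w x) K t)
    (hu_cont : ∀ s ∈ K, Continuous fun x => u x s) (hw_cont : ∀ s ∈ K, Continuous fun x => w x s) :
    HasDerivWithinAt (fun s => ∫ x in α..β, (u x s - u x t) * w x s)
      (∫ x in α..β, u' x t * w x t) K t := by
  rw [hasDerivWithinAt_iff_tendsto_slope]
  have hslope : ∀ s, slope (fun s => ∫ x in α..β, (u x s - u x t) * w x s) t s
      = ∫ x in α..β, (s - t)⁻¹ * (u x s - u x t) * w x s := by
    intro s
    simp only [slope_def_field, sub_self, zero_mul, intervalIntegral.integral_zero, sub_zero,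
      div_eq_inv_mul, ← intervalIntegral.integral_const_mul, mul_assoc]
  refine Tendsto.congr (fun s => (hslope s).symm) <|
    tendsto_integral_filter_of_dominated_convergence (fun _ => M * N) ?_ ?_
      intervalIntegrable_const ?_
  · filter_upwards [self_mem_nhdsWithin] with s hs
    exact (((continuous_const.mul ((hu_cont s hs.1).sub (hu_cont t ht))).mul
      (hw_cont s hs.1))).aestronglyMeasurable
  · filter_upwards [self_mem_nhdsWithin] with s hs
    refine ae_of_all _ fun x hx => ?_
    have hx' := uIoc_subset_uIcc hx
    have hmvt : |u x s - u x t| ≤ M * |s - t| := by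
      simpa only [Real.norm_eq_abs] using hK.norm_image_sub_le_of_norm_hasDerivWithin_le
        (hu x hx') (hu' x hx') ht hs.1
    have hst : 0 < |s - t| := abs_pos.2 (sub_ne_zero.2 hs.2)
    rw [Real.norm_eq_abs, abs_mul, abs_mul, abs_inv, mul_assoc, inv_mul_le_iff₀ hst]
    calc |u x s - u x t| * |w x s| ≤ (M * |s - t|) * N :=
          mul_le_mul hmvt (hw x hx' s hs.1) (abs_nonneg _) ((abs_nonneg _).trans hmvt)
      _ = |s - t| * (M * N) := by ring
  · refine ae_of_all _ fun x hx => ?_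
    have hx' := uIoc_subset_uIcc hx
    have hdiff := hasDerivWithinAt_iff_tendsto_slope.1 (hu x hx' t ht)
    refine (hdiff.congr fun s => ?_).mul
      ((hwt x hx').tendsto.mono_left (nhdsWithin_mono _ sdiff_subset))
    rw [slope_def_field, div_eq_inv_mul]

theorem sq_le_integral_sq_add_sq {f f' : ℝ → ℝ} {α β : ℝ} (hαβ : α < β)
    (hf : ∀ x, HasDerivAt f (f' x) x) (hf' : Continuous f') {x : ℝ} (hx : x ∈ Icc α β) :
    f x ^ 2 ≤ (1 + 1 / (β - α)) * ∫ y in α..β, (f y ^ 2 + f' y ^ 2) := by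
  have hfc : Continuous f := continuous_iff_continuousAt.2 fun x => (hf x).continuousAt
  have hgc : Continuous fun y => f y ^ 2 + f' y ^ 2 := by fun_prop
  set E := ∫ y in α..β, (f y ^ 2 + f' y ^ 2)
  have hint : IntervalIntegrable (fun y => f y ^ 2) volume α β := (hfc.pow 2).intervalIntegrable _ _
  have hsq_le : ∫ y in α..β, f y ^ 2 ≤ E :=
    integral_mono_on hαβ.le hint (hgc.intervalIntegrable _ _) fun y _ => by
      nlinarith [sq_nonneg (f' y)]
  obtain ⟨x₀, hx₀, hmin⟩ := isCompact_Icc.exists_isMinOn (nonempty_Icc.2 hαβ.le)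
    (hfc.pow 2).continuousOn
  have hmin_le : (β - α) * f x₀ ^ 2 ≤ E := by
    have := integral_mono_on hαβ.le intervalIntegrable_const hint fun y hy => hmin hy
    rw [intervalIntegral.integral_const, smul_eq_mul] at this
    exact this.trans hsq_le
  have hftc : f x ^ 2 - f x₀ ^ 2 = ∫ y in x₀..x, 2 * f y * f' y := by
    rw [integral_eq_sub_of_hasDerivAt (f := fun y => f y ^ 2)
      (fun y _ => by simpa [mul_comm] using (hf y).fun_pow 2)
      ((by fun_prop : Continuous fun y => 2 * f y * f' y).intervalIntegrable _ _)]
  have hsub : uIoc x₀ x ⊆ uIoc α β := uIoc_subset_uIoc_of_uIcc_subset_uIcc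
    (uIcc_subset_uIcc (Icc_subset_uIcc hx₀) (Icc_subset_uIcc hx))
  have hvar : ∫ y in x₀..x, 2 * f y * f' y ≤ E := by
    calc ∫ y in x₀..x, 2 * f y * f' y ≤ ∫ y in uIoc x₀ x, ‖2 * f y * f' y‖ :=
          (le_abs_self _).trans (Real.norm_eq_abs _ ▸ norm_integral_le_integral_norm_uIoc)
      _ ≤ ∫ y in uIoc x₀ x, (f y ^ 2 + f' y ^ 2) :=
          setIntegral_mono (by fun_prop : Continuous fun y => ‖2 * f y * f' y‖).integrableOn_uIoc
            hgc.integrableOn_uIoc fun y => by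
              simpa [abs_mul, mul_assoc] using two_mul_le_add_sq |f y| |f' y|
      _ ≤ ∫ y in uIoc α β, (f y ^ 2 + f' y ^ 2) :=
          setIntegral_mono_set hgc.integrableOn_uIoc (ae_of_all _ fun y => by positivity)
            hsub.eventuallyLE
      _ = E := by rw [uIoc_of_le hαβ.le, ← integral_of_le hαβ.le]
  have hx₀_le : f x₀ ^ 2 ≤ E / (β - α) := by rw [le_div_iff₀ (sub_pos.2 hαβ)]; linarith
  calc f x ^ 2 ≤ E + E / (β - α) := by linarith
    _ = (1 + 1 / (β - α)) * E := by ring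

theorem modelI_integrand_le {S ε M u p r : ℝ} (hS : 0 < S) (hε₀ : 0 ≤ ε) (hε₁ : ε ≤ 1)
    (hu : |u| ≤ M) :
    -(u ^ 2 * r) + 2 * S * ((|u| ^ 3 + ε) * (p ^ 2 - r ^ 2))
      ≤ 2 * S * (M ^ 3 + 1) * p ^ 2 + M / (8 * S) := by
  have hA := abs_nonneg u
  have hyoung : -(u ^ 2 * r) ≤ 2 * S * (|u| ^ 3 * r ^ 2) + |u| / (8 * S) := by
    have hgap : 0 ≤ 2 * S * |u| * (|u| * |r| - 1 / (4 * S)) ^ 2 := by positivity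
    have hexp : 2 * S * |u| * (|u| * |r| - 1 / (4 * S)) ^ 2
        = 2 * S * (|u| ^ 3 * r ^ 2) - |u| ^ 2 * |r| + |u| / (8 * S) := by
      rw [← sq_abs r]
      field_simp
      ring
    have hsign : -(u ^ 2 * r) ≤ |u| ^ 2 * |r| := by
      rw [sq_abs]; nlinarith [neg_abs_le r, sq_nonneg u]
    linarith
  have h3 : |u| ^ 3 ≤ M ^ 3 := pow_le_pow_left₀ hA hu 3
  have hM : |u| / (8 * S) ≤ M / (8 * S) := by gcongr
  nlinarith [sq_nonneg p, sq_nonneg r, mul_nonneg hε₀ (sq_nonneg r),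
    mul_le_mul_of_nonneg_right h3 (sq_nonneg p), mul_le_mul_of_nonneg_right hε₁ (sq_nonneg p)]

-- the solution of `y' = C y^(q+1)`, `y(0) = y₀`, which blows up at `s = y₀^(-q) / (q C)`
noncomputable def blowupBarrier (C q y₀ s : ℝ) : ℝ := (y₀ ^ (-q) - q * C * s) ^ (-q⁻¹)

section blowupBarrier

variable {C q y₀ s : ℝ}

theorem blowupBarrier_zero (hq : q ≠ 0) (hy₀ : 0 < y₀) : blowupBarrier C q y₀ 0 = y₀ := by
  rw [blowupBarrier, mul_zero, sub_zero, ← Real.rpow_mul hy₀.le, neg_mul_neg, mul_inv_cancel₀ hq,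
    Real.rpow_one]

theorem le_blowupBarrier (hC : 0 ≤ C) (hq : 0 < q) (hy₀ : 0 < y₀) (hs₀ : 0 ≤ s)
    (hs : q * C * s < y₀ ^ (-q)) : y₀ ≤ blowupBarrier C q y₀ s := by
  calc y₀ = blowupBarrier C q y₀ 0 := (blowupBarrier_zero hq.ne' hy₀).symm
    _ ≤ blowupBarrier C q y₀ s :=
      Real.rpow_le_rpow_of_nonpos (sub_pos.2 hs)
        (by simpa using mul_nonneg (mul_nonneg hq.le hC) hs₀) (neg_nonpos.2 (inv_nonneg.2 hq.le))

theorem hasDerivAt_blowupBarrier (hq : 0 < q) (hs : q * C * s < y₀ ^ (-q)) :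
    HasDerivAt (blowupBarrier C q y₀) (C * blowupBarrier C q y₀ s ^ (q + 1)) s := by
  unfold blowupBarrier
  have hbase : 0 < y₀ ^ (-q) - q * C * s := sub_pos.2 hs
  have hlin : HasDerivAt (fun s => y₀ ^ (-q) - q * C * s) (-(q * C)) s := by
    simpa using ((hasDerivAt_id s).const_mul (q * C)).const_sub (y₀ ^ (-q))
  convert hlin.rpow_const (p := -q⁻¹) (Or.inl hbase.ne') using 1
  rw [← Real.rpow_mul hbase.le]
  have : -q⁻¹ * (q + 1) = -q⁻¹ - 1 := by field_simp; ring
  rw [this]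
  field_simp

theorem blowupBarrier_le_two_rpow_inv_mul (hq : 0 < q) (hy₀ : 0 < y₀)
    (hs : q * C * s ≤ y₀ ^ (-q) / 2) : blowupBarrier C q y₀ s ≤ 2 ^ q⁻¹ * y₀ := by
  have hX : 0 < y₀ ^ (-q) := Real.rpow_pos_of_pos hy₀ _
  calc blowupBarrier C q y₀ s ≤ (y₀ ^ (-q) / 2) ^ (-q⁻¹) :=
        Real.rpow_le_rpow_of_nonpos (by positivity) (by linarith)
          (neg_nonpos.2 (inv_nonneg.2 hq.le))
    _ = 2 ^ q⁻¹ * y₀ := by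
        rw [Real.div_rpow hX.le zero_le_two, ← Real.rpow_mul hy₀.le, neg_mul_neg,
          mul_inv_cancel₀ hq.ne', Real.rpow_one, Real.rpow_neg zero_le_two, div_inv_eq_mul,
          mul_comm]

theorem blowupBarrier_three_halves :
    blowupBarrier C (3 / 2) y₀ s = (y₀ ^ (-(3 : ℝ) / 2) - 3 / 2 * C * s) ^ (-(2 : ℝ) / 3) := by
  unfold blowupBarrier
  norm_num

end blowupBarrier

theorem le_blowupBarrier_of_deriv_le {f f' : ℝ → ℝ} {C q y₀ t : ℝ} (hC : 0 ≤ C) (hq : 0 < q)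
    (hy₀ : 0 < y₀) (ht₀ : 0 ≤ t) (ht : q * C * t < y₀ ^ (-q)) (hf : ContinuousOn f (Icc 0 t))
    (hf' : ∀ s ∈ Ico 0 t, HasDerivWithinAt f (f' s) (Ici s) s) (h0 : f 0 ≤ y₀)
    (hbound : ∀ s ∈ Ico 0 t, y₀ ≤ f s → f' s ≤ C * f s ^ (q + 1)) :
    f t ≤ blowupBarrier C q y₀ t := by
  -- a strictly steeper barrier `C' > C` lets the strict fencing theorem apply
  have hsteeper : ∀ C', C < C' → q * C' * t < y₀ ^ (-q) → f t ≤ blowupBarrier C' q y₀ t := by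
    intro C' hCC' htC'
    have hC' : 0 ≤ C' := hC.trans hCC'.le
    have hbarrier : ∀ s ∈ Icc 0 t, q * C' * s < y₀ ^ (-q) := fun s hs =>
      lt_of_le_of_lt (mul_le_mul_of_nonneg_left hs.2 (mul_nonneg hq.le hC')) htC'
    have hB := fun s hs => hasDerivAt_blowupBarrier hq (hbarrier s hs)
    refine image_le_of_deriv_right_lt_deriv_boundary' hf hf' ?_
      (fun s hs => (hB s hs).continuousAt.continuousWithinAt)
      (fun s hs => (hB s (Ico_subset_Icc_self hs)).hasDerivWithinAt)
      (fun s hs hfs => ?_) (right_mem_Icc.2 ht₀)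
    · rwa [blowupBarrier_zero hq.ne' hy₀]
    · have hy₀s : y₀ ≤ f s :=
        hfs ▸ le_blowupBarrier hC' hq hy₀ hs.1 (hbarrier s (Ico_subset_Icc_self hs))
      calc f' s ≤ C * f s ^ (q + 1) := hbound s hs hy₀s
        _ < C' * f s ^ (q + 1) :=
          mul_lt_mul_of_pos_right hCC' (Real.rpow_pos_of_pos (hy₀.trans_le hy₀s) _)
        _ = C' * blowupBarrier C' q y₀ s ^ (q + 1) := by rw [hfs]
  have hcont : ContinuousAt (fun C' => blowupBarrier C' q y₀ t) C :=
    ((by fun_prop : Continuous fun C' => y₀ ^ (-q) - q * C' * t).continuousAt).rpow_const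
      (Or.inl (sub_pos.2 ht).ne')
  have hnear : ∀ᶠ C' in 𝓝[>] C, C < C' ∧ q * C' * t < y₀ ^ (-q) :=
    (eventually_mem_nhdsWithin (s := Ioi C)).and <| nhdsWithin_le_nhds <|
      (by fun_prop : Continuous fun C' => q * C' * t).continuousAt.eventually_lt
        continuousAt_const ht
  exact ge_of_tendsto (hcont.tendsto.mono_left nhdsWithin_le_nhds)
    (hnear.mono fun C' hC' => hsteeper C' hC'.1 hC'.2)

-- `√(1 + 1/(2a))` is the constant of the embedding `H¹(Ω) ⊂ L^∞(Ω)` from `sq_le_integral_sq_add_sq`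
noncomputable def modelIConst (a S : ℝ) : ℝ :=
  2 * S * (√(1 + 1 / (2 * a)) ^ 3 + 1) + a * √(1 + 1 / (2 * a)) / (4 * S)

theorem modelIConst_pos {a S : ℝ} (ha : 0 < a) (hS : 0 < S) : 0 < modelIConst a S := by
  unfold modelIConst
  positivity

theorem le_modelIConst_mul_rpow {a S V : ℝ} (ha : 0 < a) (hS : 0 < S) (hV : 1 ≤ V) :
    2 * S * (√((1 + 1 / (2 * a)) * V) ^ 3 + 1) * V + 2 * a * (√((1 + 1 / (2 * a)) * V) / (8 * S))
      ≤ modelIConst a S * V ^ (5 / 2 : ℝ) := by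
  rw [modelIConst, Real.sqrt_mul (by positivity)]
  set k := √(1 + 1 / (2 * a))
  set W := √V
  have hW : 1 ≤ W := Real.one_le_sqrt.2 hV
  have hk : 0 ≤ k := Real.sqrt_nonneg _
  have hV2 : V = W ^ 2 := (Real.sq_sqrt (by linarith)).symm
  have hV52 : V ^ (5 / 2 : ℝ) = W ^ 5 := by
    rw [hV2, ← Real.rpow_natCast, ← Real.rpow_mul (by linarith)]
    norm_num
  rw [hV52, hV2]
  have h25 : W ^ 2 ≤ W ^ 5 := pow_le_pow_right₀ hW (by norm_num)
  have h15 : W ≤ W ^ 5 := by simpa using pow_le_pow_right₀ hW (by norm_num : 1 ≤ 5)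
  have : 2 * S * W ^ 2 ≤ 2 * S * W ^ 5 := by gcongr
  have : a * k / (4 * S) * W ≤ a * k / (4 * S) * W ^ 5 := by gcongr
  calc _ = 2 * S * k ^ 3 * W ^ 5 + 2 * S * W ^ 2 + a * k / (4 * S) * W := by
        field_simp; ring
    _ ≤ _ := by nlinarith

noncomputable def h1Energy (a : ℝ) (h hx : ℝ → ℝ → ℝ) (t : ℝ) : ℝ :=
  ∫ x in (-a)..a, ((h x t) ^ 2 + (hx x t) ^ 2)

namespace ClassicalSolutionI

variable {a S ε T t : ℝ} {h hx hxx hxxx hxxxx ht : ℝ → ℝ → ℝ}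
  (sol : ClassicalSolutionI a S ε T h hx hxx hxxx hxxxx ht)
include sol

theorem periodic_h_s4 (t : ℝ) : Periodic (fun x => h x t) (2 * a) := fun x => sol.periodic_x x t

theorem periodic_hx_s4 (htt : t ∈ Icc 0 T) : Periodic (fun x => hx x t) (2 * a) :=
  (sol.periodic_h_s4 t).of_hasDerivAt fun x => sol.deriv_hx x t htt

theorem periodic_hxx_s4 (htt : t ∈ Icc 0 T) : Periodic (fun x => hxx x t) (2 * a) :=
  (sol.periodic_hx_s4 htt).of_hasDerivAt fun x => sol.deriv_hxx x t htt

theorem periodic_hxxx_s4 (htt : t ∈ Icc 0 T) : Periodic (fun x => hxxx x t) (2 * a) :=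
  (sol.periodic_hxx_s4 htt).of_hasDerivAt fun x => sol.deriv_hxxx x t htt

theorem continuous_slices (htt : t ∈ Icc 0 T) :
    Continuous (h · t) ∧ Continuous (hx · t) ∧ Continuous (hxx · t) ∧ Continuous (hxxx · t) ∧
      Continuous (ht · t) :=
  ⟨continuous_of_continuousOn_univ_prod_s4 sol.cont_h htt,
    continuous_of_continuousOn_univ_prod_s4 sol.cont_hx htt,
    continuous_of_continuousOn_univ_prod_s4 sol.cont_hxx htt,
    continuous_of_continuousOn_univ_prod_s4 sol.cont_hxxx htt,
    continuous_of_continuousOn_univ_prod_s4 sol.cont_ht htt⟩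

theorem h1Energy_sub_eq {s : ℝ} (hs : s ∈ Icc 0 T) (htt : t ∈ Icc 0 T) :
    h1Energy a h hx s - h1Energy a h hx t
      = ∫ x in (-a)..a, (h x s - h x t) * ((h x s + h x t) - (hxx x s + hxx x t)) := by
  obtain ⟨hs₀, hs₁, hs₂, -, -⟩ := sol.continuous_slices hs
  obtain ⟨ht₀, ht₁, ht₂, -, -⟩ := sol.continuous_slices htt
  -- only `h` has a time derivative, so the `h_x²` part is moved onto `h` by parts;
  -- the boundary terms cancel by periodicity
  have hparts : ∫ x in (-a)..a,
      ((hx x s - hx x t) * (hx x s + hx x t) + (h x s - h x t) * (hxx x s + hxx x t)) = 0 :=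
    integral_eq_zero_of_hasDerivAt_of_periodic
      (F := fun x => (h x s - h x t) * (hx x s + hx x t))
      (fun x => by simp only [sol.periodic_x, sol.periodic_hx_s4 hs x, sol.periodic_hx_s4 htt x])
      (fun x => ((sol.deriv_hx x s hs).sub (sol.deriv_hx x t htt)).mul
        ((sol.deriv_hxx x s hs).add (sol.deriv_hxx x t htt)))
      (Continuous.intervalIntegrable (by fun_prop) _ _)
  rw [h1Energy, h1Energy, ← integral_sub (Continuous.intervalIntegrable (by fun_prop) _ _)
    (Continuous.intervalIntegrable (by fun_prop) _ _),
    ← add_zero (∫ x in (-a)..a, (h x s - h x t) * _), ← hparts,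
    ← integral_add (Continuous.intervalIntegrable (by fun_prop) _ _)
    (Continuous.intervalIntegrable (by fun_prop) _ _)]
  congr 1
  ext x
  ring

theorem hasDerivWithinAt_h1Energy (htt : t ∈ Icc 0 T) :
    HasDerivWithinAt (h1Energy a h hx) (∫ x in (-a)..a, 2 * ht x t * (h x t - hxx x t))
      (Icc 0 T) t := by
  obtain ⟨M, hM⟩ := exists_abs_le_of_continuousOn_univ_prod isCompact_Icc sol.cont_ht (-a) a
  obtain ⟨Mh, hMh⟩ := exists_abs_le_of_continuousOn_univ_prod isCompact_Icc sol.cont_h (-a) a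
  obtain ⟨Mxx, hMxx⟩ := exists_abs_le_of_continuousOn_univ_prod isCompact_Icc sol.cont_hxx (-a) a
  have hderiv := hasDerivWithinAt_integral_sub_mul_s4 (u := h) (u' := ht)
    (w := fun x s => (h x s + h x t) - (hxx x s + hxx x t)) (N := 2 * Mh + 2 * Mxx)
    (convex_Icc 0 T) htt (fun x _ s hs => sol.deriv_ht x s hs) hM
    (fun y hy s hs => by
      have := abs_sub (h y s + h y t) (hxx y s + hxx y t)
      have := abs_add_le (h y s) (h y t)
      have := abs_add_le (hxx y s) (hxx y t)
      linarith [hMh y hy s hs, hMh y hy t htt, hMxx y hy s hs, hMxx y hy t htt])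
    (fun x _ => ((continuousOn_of_continuousOn_univ_prod sol.cont_h x t htt).add
      continuousWithinAt_const).sub
      ((continuousOn_of_continuousOn_univ_prod sol.cont_hxx x t htt).add continuousWithinAt_const))
    (fun s hs => (sol.continuous_slices hs).1)
    (fun s hs => by
      obtain ⟨hs₀, -, hs₂, -, -⟩ := sol.continuous_slices hs
      obtain ⟨ht₀, -, ht₂, -, -⟩ := sol.continuous_slices htt
      fun_prop)
  refine ((hderiv.const_add (h1Energy a h hx t)).congr (fun s hs => ?_) ?_).congr_deriv ?_
  · rw [← sol.h1Energy_sub_eq hs htt, add_sub_cancel]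
  · simp
  · congr 1; ext x; ring

theorem integral_energy_rate_eq (htt : t ∈ Icc 0 T) :
    ∫ x in (-a)..a, 2 * ht x t * (h x t - hxx x t)
      = ∫ x in (-a)..a, (-(h x t ^ 2 * hxxx x t)
          + 2 * S * ((|h x t| ^ 3 + ε) * (hx x t ^ 2 - hxxx x t ^ 2))) := by
  obtain ⟨c₀, c₁, c₂, c₃, c₄⟩ := sol.continuous_slices htt
  have hperiodic := integral_eq_zero_of_hasDerivAt_of_periodic (a := a)
    (F := fun y => -(2 / 3) * h y t ^ 3 + h y t ^ 2 * hxx y t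
      - 2 * (S * ((|h y t| ^ 3 + ε) * (hx y t + hxxx y t)) * (h y t - hxx y t)))
    (fun x => by
      simp only [sol.periodic_x, sol.periodic_hx_s4 htt x, sol.periodic_hxx_s4 htt x,
        sol.periodic_hxxx_s4 htt x])
    (fun x => by
      have hd := (((sol.deriv_hx x t htt).fun_pow 3).const_mul (-(2 / 3) : ℝ)).fun_add
        (((sol.deriv_hx x t htt).fun_pow 2).fun_mul (sol.deriv_hxxx x t htt)) |>.fun_sub
        (((sol.pde x t htt).fun_mul
          ((sol.deriv_hx x t htt).fun_sub (sol.deriv_hxxx x t htt))).const_mul 2)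
      refine hd.congr_deriv ?_
      push_cast
      ring)
    (Continuous.intervalIntegrable (u := fun x => 2 * ht x t * (h x t - hxx x t)
      - (-(h x t ^ 2 * hxxx x t) + 2 * S * ((|h x t| ^ 3 + ε) * (hx x t ^ 2 - hxxx x t ^ 2))))
      (by fun_prop) _ _)
  rwa [integral_sub (Continuous.intervalIntegrable (by fun_prop) _ _)
    (Continuous.intervalIntegrable (by fun_prop) _ _), sub_eq_zero] at hperiodic

theorem integral_energy_rate_le (ha : 0 < a) (hS : 0 < S) (hε₀ : 0 ≤ ε) (hε₁ : ε ≤ 1)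
    (htt : t ∈ Icc 0 T) :
    ∫ x in (-a)..a, 2 * ht x t * (h x t - hxx x t)
      ≤ modelIConst a S * max 1 (h1Energy a h hx t) ^ (5 / 2 : ℝ) := by
  obtain ⟨c₀, c₁, -, c₃, -⟩ := sol.continuous_slices htt
  set V := max 1 (h1Energy a h hx t)
  set M := √((1 + 1 / (2 * a)) * V)
  have hsup : ∀ x ∈ Icc (-a) a, |h x t| ≤ M := fun x hxI => Real.abs_le_sqrt <|
    calc h x t ^ 2 ≤ (1 + 1 / (a - -a)) * h1Energy a h hx t :=
          sq_le_integral_sq_add_sq (by linarith) (fun y => sol.deriv_hx y t htt) c₁ hxI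
      _ ≤ (1 + 1 / (2 * a)) * V := by
          rw [sub_neg_eq_add, ← two_mul]
          exact mul_le_mul_of_nonneg_left (le_max_right _ _) (by positivity)
  have hhx : ∫ x in (-a)..a, hx x t ^ 2 ≤ V :=
    (integral_mono_on (by linarith) (Continuous.intervalIntegrable (by fun_prop) _ _)
      (Continuous.intervalIntegrable (by fun_prop) _ _)
      fun x _ => le_add_of_nonneg_left (sq_nonneg (h x t))).trans (le_max_right _ _)
  rw [sol.integral_energy_rate_eq htt]
  calc _ ≤ ∫ x in (-a)..a, (2 * S * (M ^ 3 + 1) * hx x t ^ 2 + M / (8 * S)) :=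
        integral_mono_on (by linarith) (Continuous.intervalIntegrable (by fun_prop) _ _)
          (Continuous.intervalIntegrable (by fun_prop) _ _)
          fun x hxI => modelI_integrand_le hS hε₀ hε₁ (hsup x hxI)
    _ = 2 * S * (M ^ 3 + 1) * (∫ x in (-a)..a, hx x t ^ 2) + 2 * a * (M / (8 * S)) := by
        rw [integral_add (Continuous.intervalIntegrable (by fun_prop) _ _) intervalIntegrable_const,
          intervalIntegral.integral_const_mul, intervalIntegral.integral_const, smul_eq_mul]
        ring
    _ ≤ 2 * S * (M ^ 3 + 1) * V + 2 * a * (M / (8 * S)) := by gcongr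
    _ ≤ _ := le_modelIConst_mul_rpow ha hS (le_max_left _ _)

theorem max_one_h1Energy_le_blowupBarrier (ha : 0 < a) (hS : 0 < S) (hε₀ : 0 ≤ ε) (hε₁ : ε ≤ 1)
    (ht₀ : 0 ≤ t) (htT : t ≤ T)
    (hlt : 3 / 2 * modelIConst a S * t < max 1 (h1Energy a h hx 0) ^ (-(3 / 2 : ℝ))) :
    max 1 (h1Energy a h hx t)
      ≤ blowupBarrier (modelIConst a S) (3 / 2) (max 1 (h1Energy a h hx 0)) t := by
  have hC := (modelIConst_pos ha hS).le
  have hy₀ : 1 ≤ max 1 (h1Energy a h hx 0) := le_max_left _ _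
  have hE : ∀ s ∈ Icc 0 T, HasDerivWithinAt (h1Energy a h hx)
      (∫ x in (-a)..a, 2 * ht x s * (h x s - hxx x s)) (Icc 0 T) s :=
    fun s hs => sol.hasDerivWithinAt_h1Energy hs
  refine max_le (hy₀.trans (le_blowupBarrier hC (by norm_num) (by linarith) ht₀ hlt)) ?_
  refine le_blowupBarrier_of_deriv_le hC (by norm_num) (by linarith) ht₀ hlt
    ((HasDerivWithinAt.continuousOn hE).mono (Icc_subset_Icc_right htT))
    (fun s hs => (hE s ⟨hs.1, hs.2.le.trans htT⟩).mono_of_mem_nhdsWithin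
      (Icc_mem_nhdsGE_of_mem ⟨hs.1, hs.2.trans_le htT⟩))
    (le_max_right _ _) fun s hs hs₀ => ?_
  have hrate := sol.integral_energy_rate_le ha hS hε₀ hε₁ ⟨hs.1, hs.2.le.trans htT⟩
  rwa [max_eq_right (hy₀.trans hs₀), show (5 / 2 : ℝ) = 3 / 2 + 1 by norm_num] at hrate

end ClassicalSolutionI

/-- Local in time a priori `H¹` estimate for regularized Model I, with a constant
depending only on `S` and `a`, uniform in `ε ∈ (0,1]`. -/
theorem modelI_local_estimate
    (a S : ℝ) (ha : 0 < a) (hS : 0 < S) :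
    ∃ C : ℝ, 0 < C ∧
      ∀ ε ∈ Set.Ioc (0:ℝ) 1, ∀ T : ℝ, 0 < T →
      ∀ h hx hxx hxxx hxxxx ht : ℝ → ℝ → ℝ,
        ClassicalSolutionI a S ε T h hx hxx hxxx hxxxx ht →
        (∀ t : ℝ, 0 ≤ t →
            t < min T ((2 / (3 * C)) *
              (max 1 (∫ x in (-a)..a, ((h x 0)^2 + (hx x 0)^2))) ^ (-(3:ℝ)/2)) →
            max 1 (∫ x in (-a)..a, ((h x t)^2 + (hx x t)^2)) ≤
              ((max 1 (∫ x in (-a)..a, ((h x 0)^2 + (hx x 0)^2))) ^ (-(3:ℝ)/2)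
                - (3/2) * C * t) ^ (-(2:ℝ)/3)) ∧
        (∀ t : ℝ, 0 ≤ t →
            t ≤ min T ((1 / (3 * C)) *
              (max 1 (∫ x in (-a)..a, ((h x 0)^2 + (hx x 0)^2))) ^ (-(3:ℝ)/2)) →
            (∫ x in (-a)..a, ((h x t)^2 + (hx x t)^2)) ≤
              (2:ℝ) ^ ((2:ℝ)/3) * max 1 (∫ x in (-a)..a, ((h x 0)^2 + (hx x 0)^2))) := by
  have hC := modelIConst_pos ha hS
  refine ⟨modelIConst a S, hC, fun ε hε T _ h hx hxx hxxx hxxxx ht sol => ?_⟩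
  set C := modelIConst a S
  set y₀ := max 1 (h1Energy a h hx 0)
  have hy₀ : 0 < y₀ := lt_max_of_lt_left one_pos
  have hbarrier : ∀ t, 0 ≤ t → t ≤ T → 3 / 2 * C * t < y₀ ^ (-(3 : ℝ) / 2) →
      max 1 (h1Energy a h hx t) ≤ blowupBarrier C (3 / 2) y₀ t := fun t ht₀ htT hlt =>
    sol.max_one_h1Energy_le_blowupBarrier ha hS hε.1.le hε.2 ht₀ htT (by rwa [← neg_div])
  refine ⟨fun t ht₀ htT => ?_, fun t ht₀ htT => ?_⟩
  · rw [lt_min_iff] at htT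
    rw [← blowupBarrier_three_halves]
    refine hbarrier t ht₀ htT.1.le ?_
    calc 3 / 2 * C * t < 3 / 2 * C * (2 / (3 * C) * y₀ ^ (-(3 : ℝ) / 2)) := by gcongr; exact htT.2
      _ = y₀ ^ (-(3 : ℝ) / 2) := by field_simp
  · rw [le_min_iff] at htT
    have hhalf : 3 / 2 * C * t ≤ y₀ ^ (-(3 / 2 : ℝ)) / 2 := by
      calc 3 / 2 * C * t ≤ 3 / 2 * C * (1 / (3 * C) * y₀ ^ (-(3 : ℝ) / 2)) := by gcongr; exact htT.2
        _ = y₀ ^ (-(3 / 2 : ℝ)) / 2 := by rw [neg_div]; field_simp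
    calc h1Energy a h hx t ≤ max 1 (h1Energy a h hx t) := le_max_right _ _
      _ ≤ blowupBarrier C (3 / 2) y₀ t := hbarrier t ht₀ htT.1 (by
          rw [neg_div]; linarith [Real.rpow_pos_of_pos hy₀ (-(3 / 2 : ℝ))])
      _ ≤ 2 ^ (3 / 2 : ℝ)⁻¹ * y₀ := blowupBarrier_le_two_rpow_inv_mul (by norm_num) hy₀ hhalf
      _ = 2 ^ ((2 : ℝ) / 3) * y₀ := by norm_num
end

section
/- Let h be a classical periodic solution of the regularized Model I equation on [0,T]. Suppose K₃ > 0 is such that |h(x₁,t) − h(x₂,t)| ≤ K₃·|x₁ − x₂|^{1/2} for all x₁, x₂ ∈ [−a,a] and t ∈ [0,T], and let F = ( ∫_0^T ∫_{−a}^{a} ( h²/2 + S·(|h|³ + ε)(h_x + h_xxx) )² dx dt )^{1/2} < ∞. Then there exists a constant M̄ > 0 depending only on K₃ and F such that for every x₀ ∈ (−a,a) and every 0 ≤ t₁ < t₂ ≤ T for which the interval [ x₀ − (M̄²/(16K₃²))·(t₂ − t₁)^{1/4}, x₀ + (M̄²/(16K₃²))·(t₂ − t₁)^{1/4} ] is contained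 in (−a,a), one has |h(x₀,t₁) − h(x₀,t₂)| ≤ M̄·(t₂ − t₁)^{1/8}. -/
open MeasureTheory Set Function Filter Topology

theorem intervalIntegral_integral_swap_of_continuousOn {f : ℝ → ℝ → ℝ} {a b c d : ℝ}
    (hab : a ≤ b) (hcd : c ≤ d) (hf : ContinuousOn (uncurry f) (Icc a b ×ˢ Icc c d)) :
    ∫ x in a..b, ∫ y in c..d, f x y = ∫ y in c..d, ∫ x in a..b, f x y := by
  have hint : Integrable (uncurry f)
      ((volume.restrict (Ioc a b)).prod (volume.restrict (Ioc c d))) := by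
    rw [Measure.prod_restrict, ← Measure.volume_eq_prod]
    exact (hf.integrableOn_compact (isCompact_Icc.prod isCompact_Icc)).mono_set
      (prod_mono Ioc_subset_Icc_self Ioc_subset_Icc_self)
  simp_rw [intervalIntegral.integral_of_le hab, intervalIntegral.integral_of_le hcd]
  exact integral_integral_swap hint

theorem integral_comp_add_add_comp_sub {ψ : ℝ → ℝ} (hψ : Continuous ψ) (x₀ r : ℝ) :
    ∫ ρ in (0:ℝ)..r, (ψ (x₀ + ρ) + ψ (x₀ - ρ)) = ∫ x in (x₀ - r)..(x₀ + r), ψ x := by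
  rw [intervalIntegral.integral_add
      ((by fun_prop : Continuous fun ρ => ψ (x₀ + ρ)).intervalIntegrable _ _)
      ((by fun_prop : Continuous fun ρ => ψ (x₀ - ρ)).intervalIntegrable _ _),
    intervalIntegral.integral_comp_add_left, intervalIntegral.integral_comp_sub_left, add_zero,
    sub_zero, add_comm]
  exact intervalIntegral.integral_add_adjacent_intervals (hψ.intervalIntegrable _ _)
    (hψ.intervalIntegrable _ _)

theorem two_mul_sub_le_abs_integral {g : ℝ → ℝ} {x₀ ρ δ : ℝ} (hρ : 0 ≤ ρ)
    (hg : IntervalIntegrable g volume (x₀ - ρ) (x₀ + ρ))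
    (hosc : ∀ x ∈ Icc (x₀ - ρ) (x₀ + ρ), |g x - g x₀| ≤ δ) :
    2 * ρ * (|g x₀| - δ) ≤ |∫ x in (x₀ - ρ)..(x₀ + ρ), g x| := by
  have hle : x₀ - ρ ≤ x₀ + ρ := by linarith
  have hlen : x₀ + ρ - (x₀ - ρ) = 2 * ρ := by ring
  set E := ∫ x in (x₀ - ρ)..(x₀ + ρ), (g x - g x₀) with hE_def
  have hE : |E| ≤ δ * (2 * ρ) := by
    have := intervalIntegral.norm_integral_le_of_norm_le_const (C := δ)
      (f := fun x => g x - g x₀) fun x hx =>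
        hosc x (uIoc_subset_uIcc.trans (uIcc_of_le hle).subset hx)
    rwa [hlen, abs_of_nonneg (by positivity)] at this
  have hsplit : ∫ x in (x₀ - ρ)..(x₀ + ρ), g x = E + 2 * ρ * g x₀ := by
    rw [hE_def, intervalIntegral.integral_sub hg intervalIntegrable_const,
      intervalIntegral.integral_const, hlen, smul_eq_mul]
    ring
  calc 2 * ρ * (|g x₀| - δ) = |2 * ρ * g x₀| - δ * (2 * ρ) := by
        rw [abs_mul, abs_of_nonneg (by positivity : (0:ℝ) ≤ 2 * ρ)]; ring
    _ ≤ |E + 2 * ρ * g x₀| := by linarith [abs_add' (2 * ρ * g x₀) E]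
    _ = |∫ x in (x₀ - ρ)..(x₀ + ρ), g x| := by rw [hsplit]

theorem sq_mul_sub_le_integral_integral_abs {g : ℝ → ℝ} {f : ℝ → ℝ → ℝ} (hg : Continuous g)
    (hf : Continuous (uncurry f)) {x₀ r t₁ t₂ δ : ℝ} (hr : 0 ≤ r) (ht : t₁ ≤ t₂)
    (hbal : ∀ ρ ∈ Icc 0 r,
      ∫ x in (x₀ - ρ)..(x₀ + ρ), g x = ∫ t in t₁..t₂, (f (x₀ + ρ) t - f (x₀ - ρ) t))
    (hosc : ∀ x ∈ Icc (x₀ - r) (x₀ + r), |g x - g x₀| ≤ δ) :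
    r ^ 2 * (|g x₀| - δ) ≤ ∫ t in t₁..t₂, ∫ x in (x₀ - r)..(x₀ + r), |f x t| := by
  have hf' : Continuous fun p : ℝ × ℝ => |f p.1 p.2| := hf.abs
  set Ψ : ℝ → ℝ := fun x => ∫ t in t₁..t₂, |f x t|
  have hΨ : Continuous Ψ :=
    intervalIntegral.continuous_parametric_intervalIntegral_of_continuous' hf' _ _
  have hfx : ∀ x, Continuous fun t => f x t := fun x => hf.comp (Continuous.prodMk_right x)
  have hρ : ∀ ρ ∈ Icc 0 r, 2 * ρ * (|g x₀| - δ) ≤ Ψ (x₀ + ρ) + Ψ (x₀ - ρ) := by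
    intro ρ hρ
    calc 2 * ρ * (|g x₀| - δ) ≤ |∫ x in (x₀ - ρ)..(x₀ + ρ), g x| :=
          two_mul_sub_le_abs_integral hρ.1 (hg.intervalIntegrable _ _) fun x hx =>
            hosc x (Icc_subset_Icc (by linarith [hρ.2]) (by linarith [hρ.2]) hx)
      _ ≤ ∫ t in t₁..t₂, |f (x₀ + ρ) t - f (x₀ - ρ) t| := by
          rw [hbal ρ hρ]; exact intervalIntegral.abs_integral_le_integral_abs ht
      _ ≤ ∫ t in t₁..t₂, (|f (x₀ + ρ) t| + |f (x₀ - ρ) t|) :=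
          intervalIntegral.integral_mono_on ht (((hfx _).sub (hfx _)).abs.intervalIntegrable _ _)
            (((hfx _).abs.add (hfx _).abs).intervalIntegrable _ _) fun t _ => abs_sub _ _
      _ = Ψ (x₀ + ρ) + Ψ (x₀ - ρ) :=
          intervalIntegral.integral_add ((hfx _).abs.intervalIntegrable _ _)
            ((hfx _).abs.intervalIntegrable _ _)
  calc r ^ 2 * (|g x₀| - δ) = ∫ ρ in (0:ℝ)..r, 2 * ρ * (|g x₀| - δ) := by
        rw [intervalIntegral.integral_mul_const, intervalIntegral.integral_const_mul, integral_id]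
        ring
    _ ≤ ∫ ρ in (0:ℝ)..r, (Ψ (x₀ + ρ) + Ψ (x₀ - ρ)) :=
        intervalIntegral.integral_mono_on hr
          ((by fun_prop : Continuous fun ρ : ℝ => 2 * ρ * (|g x₀| - δ)).intervalIntegrable _ _)
          ((by fun_prop : Continuous fun ρ => Ψ (x₀ + ρ) + Ψ (x₀ - ρ)).intervalIntegrable _ _) hρ
    _ = ∫ x in (x₀ - r)..(x₀ + r), Ψ x := integral_comp_add_add_comp_sub hΨ x₀ r
    _ = ∫ t in t₁..t₂, ∫ x in (x₀ - r)..(x₀ + r), |f x t| :=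
        intervalIntegral_integral_swap_of_continuousOn (by linarith) ht hf'.continuousOn

theorem abs_le_amgm {lam : ℝ} (hlam : 0 < lam) (y : ℝ) : |y| ≤ (lam * y ^ 2 + 1 / lam) / 2 := by
  have hgap : (lam * y ^ 2 + 1 / lam) / 2 - |y| = (lam * |y| - 1) ^ 2 / (2 * lam) := by
    rw [← sq_abs y]; field_simp; ring
  linarith [hgap, (by positivity : 0 ≤ (lam * |y| - 1) ^ 2 / (2 * lam))]

theorem integral_integral_abs_le_amgm {f : ℝ → ℝ → ℝ} (hf : Continuous (uncurry f))
    {a b c d lam : ℝ} (hab : a ≤ b) (hcd : c ≤ d) (hlam : 0 < lam) :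
    ∫ t in c..d, ∫ x in a..b, |f x t|
      ≤ (lam * (∫ t in c..d, ∫ x in a..b, f x t ^ 2) + (b - a) * (d - c) / lam) / 2 := by
  have hft : ∀ t, Continuous fun x => f x t := fun t => hf.comp (Continuous.prodMk_left t)
  have hf' : Continuous fun p : ℝ × ℝ => f p.2 p.1 := hf.comp continuous_swap
  have hsq : Continuous fun t => ∫ x in a..b, f x t ^ 2 :=
    intervalIntegral.continuous_parametric_intervalIntegral_of_continuous'
      (f := fun t x => f x t ^ 2) (by fun_prop) _ _
  have inner : ∀ t,
      ∫ x in a..b, |f x t| ≤ (lam * (∫ x in a..b, f x t ^ 2) + (b - a) / lam) / 2 := by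
    intro t
    calc ∫ x in a..b, |f x t| ≤ ∫ x in a..b, (lam * f x t ^ 2 + 1 / lam) / 2 :=
          intervalIntegral.integral_mono_on hab ((hft t).abs.intervalIntegrable _ _)
            ((by fun_prop : Continuous fun x =>
              (lam * f x t ^ 2 + 1 / lam) / 2).intervalIntegrable _ _)
            fun x _ => abs_le_amgm hlam _
      _ = _ := by
          rw [intervalIntegral.integral_div, intervalIntegral.integral_add
            ((by fun_prop : Continuous fun x => lam * f x t ^ 2).intervalIntegrable _ _)
            intervalIntegrable_const,
            intervalIntegral.integral_const_mul, intervalIntegral.integral_const, smul_eq_mul]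
          ring
  calc ∫ t in c..d, ∫ x in a..b, |f x t|
      ≤ ∫ t in c..d, (lam * (∫ x in a..b, f x t ^ 2) + (b - a) / lam) / 2 :=
        intervalIntegral.integral_mono_on hcd
          ((intervalIntegral.continuous_parametric_intervalIntegral_of_continuous'
            (f := fun t x => |f x t|) hf'.abs _ _).intervalIntegrable _ _)
          ((by fun_prop : Continuous fun t =>
            (lam * (∫ x in a..b, f x t ^ 2) + (b - a) / lam) / 2).intervalIntegrable _ _)
          fun t _ => inner t
    _ = _ := by
        rw [intervalIntegral.integral_div, intervalIntegral.integral_add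
          ((hsq.const_mul lam).intervalIntegrable _ _) intervalIntegrable_const,
          intervalIntegral.integral_const_mul, intervalIntegral.integral_const, smul_eq_mul]
        ring

theorem le_sqrt_mul_sqrt_of_forall_le_amgm {I X Y : ℝ} (hX : 0 ≤ X) (hY : 0 ≤ Y)
    (h : ∀ lam > 0, I ≤ (lam * X + Y / lam) / 2) : I ≤ √Y * √X := by
  -- Take `lam = (√Y + η) / (√X + η)`; the shift `η > 0` avoids dividing by zero.
  have hlim : Tendsto (fun η => (√Y + η) * (√X + η)) (𝓝[>] 0) (𝓝 (√Y * √X)) := by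
    have := ((continuous_const.add continuous_id).mul (continuous_const.add continuous_id)).tendsto
      (0:ℝ) (f := fun η : ℝ => (√Y + η) * (√X + η))
    simpa using this.mono_left nhdsWithin_le_nhds
  refine ge_of_tendsto hlim (eventually_nhdsWithin_of_forall fun η (hη : 0 < η) => ?_)
  have hs : 0 < √X + η := by positivity
  have ht : 0 < √Y + η := by positivity
  have hXs : X ≤ (√X + η) ^ 2 := by nlinarith [Real.sq_sqrt hX, Real.sqrt_nonneg X]
  have hYt : Y ≤ (√Y + η) ^ 2 := by nlinarith [Real.sq_sqrt hY, Real.sqrt_nonneg Y]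
  calc I ≤ ((√Y + η) / (√X + η) * X + Y / ((√Y + η) / (√X + η))) / 2 := h _ (by positivity)
    _ ≤ ((√Y + η) / (√X + η) * (√X + η) ^ 2 + (√Y + η) ^ 2 / ((√Y + η) / (√X + η))) / 2 := by
        gcongr
    _ = (√Y + η) * (√X + η) := by field_simp; ring

theorem integral_integral_abs_le_sqrt_mul_sqrt {f : ℝ → ℝ → ℝ} (hf : Continuous (uncurry f))
    {a b c d : ℝ} (hab : a ≤ b) (hcd : c ≤ d) :
    ∫ t in c..d, ∫ x in a..b, |f x t|
      ≤ √((b - a) * (d - c)) * √(∫ t in c..d, ∫ x in a..b, f x t ^ 2) :=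
  le_sqrt_mul_sqrt_of_forall_le_amgm
    (intervalIntegral.integral_nonneg hcd fun _ _ =>
      intervalIntegral.integral_nonneg hab fun _ _ => sq_nonneg _)
    (mul_nonneg (sub_nonneg.2 hab) (sub_nonneg.2 hcd))
    fun _ hlam => integral_integral_abs_le_amgm hf hab hcd hlam

theorem integral_integral_mono_of_subset {φ : ℝ → ℝ → ℝ} (hφ : Continuous (uncurry φ))
    (hφ0 : ∀ x t, 0 ≤ φ x t) {a a' b' b c c' d' d : ℝ} (ha : a ≤ a') (hab' : a' ≤ b') (hb : b' ≤ b)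
    (hc : c ≤ c') (hcd' : c' ≤ d') (hd : d' ≤ d) :
    ∫ t in c'..d', ∫ x in a'..b', φ x t ≤ ∫ t in c..d, ∫ x in a..b, φ x t := by
  have hφt : ∀ t, Continuous fun x => φ x t := fun t => hφ.comp (Continuous.prodMk_left t)
  have hΦ : Continuous fun t => ∫ x in a..b, φ x t :=
    intervalIntegral.continuous_parametric_intervalIntegral_of_continuous'
      (f := fun t x => φ x t) (hφ.comp continuous_swap) _ _
  calc ∫ t in c'..d', ∫ x in a'..b', φ x t ≤ ∫ t in c'..d', ∫ x in a..b, φ x t :=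
        intervalIntegral.integral_mono_on hcd'
          ((intervalIntegral.continuous_parametric_intervalIntegral_of_continuous'
            (f := fun t x => φ x t) (hφ.comp continuous_swap) _ _).intervalIntegrable _ _)
          (hΦ.intervalIntegrable _ _) fun t _ =>
            intervalIntegral.integral_mono_interval ha hab' hb
              (Eventually.of_forall fun x => hφ0 x t) ((hφt t).intervalIntegrable _ _)
    _ ≤ ∫ t in c..d, ∫ x in a..b, φ x t :=
        intervalIntegral.integral_mono_interval hc hcd' hd
          (Eventually.of_forall fun t =>
            intervalIntegral.integral_nonneg (ha.trans (hab'.trans hb)) fun x _ => hφ0 x t)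
          (hΦ.intervalIntegrable _ _)

theorem ContinuousOn.continuous_uncurry_projIcc {φ : ℝ → ℝ → ℝ} {T : ℝ} (hT : 0 ≤ T)
    (hφ : ContinuousOn (uncurry φ) (univ ×ˢ Icc 0 T)) :
    Continuous (uncurry fun x t => φ x (projIcc 0 T hT t)) :=
  hφ.comp_continuous (continuous_fst.prodMk (continuous_subtype_val.comp
    ((continuous_projIcc (h := hT)).comp continuous_snd)))
    fun p => ⟨mem_univ _, (projIcc 0 T hT p.2).2⟩

theorem abs_sub_sub_le_of_holder {h : ℝ → ℝ → ℝ} {s I : Set ℝ} {K r x₀ t₁ t₂ : ℝ} (hK : 0 ≤ K)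
    (hHold : ∀ x₁ ∈ s, ∀ x₂ ∈ s, ∀ t ∈ I, |h x₁ t - h x₂ t| ≤ K * |x₁ - x₂| ^ ((1:ℝ)/2))
    (ht₁ : t₁ ∈ I) (ht₂ : t₂ ∈ I) (hr : 0 ≤ r) (hsub : Icc (x₀ - r) (x₀ + r) ⊆ s) :
    ∀ x ∈ Icc (x₀ - r) (x₀ + r),
      |(h x t₁ - h x t₂) - (h x₀ t₁ - h x₀ t₂)| ≤ 2 * K * r ^ ((1:ℝ)/2) := by
  intro x hx
  have hx₀ : x₀ ∈ s := hsub ⟨by linarith, by linarith⟩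
  have hdist : K * |x - x₀| ^ ((1:ℝ)/2) ≤ K * r ^ ((1:ℝ)/2) := by
    gcongr
    exact abs_sub_le_iff.2 ⟨by linarith [hx.2], by linarith [hx.1]⟩
  calc |(h x t₁ - h x t₂) - (h x₀ t₁ - h x₀ t₂)|
      = |(h x t₁ - h x₀ t₁) - (h x t₂ - h x₀ t₂)| := by ring_nf
    _ ≤ |h x t₁ - h x₀ t₁| + |h x t₂ - h x₀ t₂| := abs_sub _ _
    _ ≤ 2 * K * r ^ ((1:ℝ)/2) := by
        linarith [hHold x (hsub hx) x₀ hx₀ t₁ ht₁, hHold x (hsub hx) x₀ hx₀ t₂ ht₂]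

noncomputable def modelIFlux (S ε : ℝ) (h hx hxxx : ℝ → ℝ → ℝ) (x t : ℝ) : ℝ :=
  h x t ^ 2 / 2 + S * (|h x t| ^ 3 + ε) * (hx x t + hxxx x t)

namespace ClassicalSolutionI

variable {a S ε T : ℝ} {h hx hxx hxxx hxxxx ht : ℝ → ℝ → ℝ}

theorem continuous_slice (sol : ClassicalSolutionI a S ε T h hx hxx hxxx hxxxx ht)
    {t : ℝ} (htT : t ∈ Icc 0 T) : Continuous fun x => h x t :=
  continuous_iff_continuousAt.2 fun x => (sol.deriv_hx x t htT).continuousAt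

theorem continuousOn_flux (sol : ClassicalSolutionI a S ε T h hx hxx hxxx hxxxx ht) :
    ContinuousOn (uncurry (modelIFlux S ε h hx hxxx)) (univ ×ˢ Icc 0 T) := by
  have := sol.cont_h
  have := sol.cont_hx
  have := sol.cont_hxxx
  unfold modelIFlux uncurry
  fun_prop

theorem hasDerivAt_flux (sol : ClassicalSolutionI a S ε T h hx hxx hxxx hxxxx ht)
    {x t : ℝ} (htT : t ∈ Icc 0 T) :
    HasDerivAt (fun y => modelIFlux S ε h hx hxxx y t) (-ht x t) x := by
  have hsq : HasDerivAt (fun y => h y t ^ 2 / 2) (h x t * hx x t) x :=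
    (((sol.deriv_hx x t htT).fun_pow 2).div_const 2).congr_deriv (by norm_num; ring)
  have hflux : (fun y => modelIFlux S ε h hx hxxx y t) =
      fun y => h y t ^ 2 / 2 + S * ((|h y t| ^ 3 + ε) * (hx y t + hxxx y t)) := by
    funext y; simp only [modelIFlux]; ring
  rw [hflux]
  exact (hsq.add (sol.pde x t htT)).congr_deriv (by ring)

theorem integral_ht_eq_flux_sub (sol : ClassicalSolutionI a S ε T h hx hxx hxxx hxxxx ht)
    {t : ℝ} (htT : t ∈ Icc 0 T) (p q : ℝ) :
    ∫ x in p..q, ht x t = modelIFlux S ε h hx hxxx p t - modelIFlux S ε h hx hxxx q t := by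
  have hcont : Continuous fun x => ht x t :=
    sol.cont_ht.comp_continuous (continuous_id.prodMk continuous_const) fun _ => ⟨trivial, htT⟩
  have := intervalIntegral.integral_eq_sub_of_hasDerivAt (fun x _ => sol.hasDerivAt_flux htT)
    (hcont.neg.intervalIntegrable p q)
  rw [intervalIntegral.integral_neg] at this
  linarith

theorem sub_eq_integral_ht (sol : ClassicalSolutionI a S ε T h hx hxx hxxx hxxxx ht)
    (x : ℝ) {t₁ t₂ : ℝ} (ht₁ : 0 ≤ t₁) (ht₁₂ : t₁ ≤ t₂) (ht₂ : t₂ ≤ T) :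
    h x t₂ - h x t₁ = ∫ t in t₁..t₂, ht x t := by
  have hsub : Icc t₁ t₂ ⊆ Icc 0 T := Icc_subset_Icc ht₁ ht₂
  have hcont : ContinuousOn (fun t => ht x t) (Icc 0 T) :=
    sol.cont_ht.comp (continuous_const.prodMk continuous_id).continuousOn fun _ h => ⟨trivial, h⟩
  refine (intervalIntegral.integral_eq_sub_of_hasDerivAt_of_le ht₁₂
    (fun t htt => (sol.deriv_ht x t (hsub htt)).continuousWithinAt.mono hsub)
    (fun t htt => (sol.deriv_ht x t (hsub (Ioo_subset_Icc_self htt))).hasDerivAt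
      (Icc_mem_nhds (by linarith [htt.1]) (by linarith [htt.2])))
    ((hcont.mono ?_).intervalIntegrable)).symm
  rwa [uIcc_of_le ht₁₂]

theorem integral_sub_eq_integral_flux_sub (sol : ClassicalSolutionI a S ε T h hx hxx hxxx hxxxx ht)
    {p q t₁ t₂ : ℝ} (hpq : p ≤ q) (ht₁ : 0 ≤ t₁) (ht₁₂ : t₁ ≤ t₂) (ht₂ : t₂ ≤ T) :
    ∫ x in p..q, (h x t₁ - h x t₂) =
      ∫ t in t₁..t₂, (modelIFlux S ε h hx hxxx q t - modelIFlux S ε h hx hxxx p t) := by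
  have hmem : uIcc t₁ t₂ ⊆ Icc 0 T := uIcc_subset_Icc ⟨ht₁, ht₁₂.trans ht₂⟩ ⟨ht₁.trans ht₁₂, ht₂⟩
  calc ∫ x in p..q, (h x t₁ - h x t₂) = ∫ x in p..q, ∫ t in t₁..t₂, -ht x t := by
        refine intervalIntegral.integral_congr fun x _ => ?_
        rw [intervalIntegral.integral_neg, ← sol.sub_eq_integral_ht x ht₁ ht₁₂ ht₂, neg_sub]
    _ = ∫ t in t₁..t₂, ∫ x in p..q, -ht x t :=
        intervalIntegral_integral_swap_of_continuousOn hpq ht₁₂ <| sol.cont_ht.neg.mono <|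
          prod_mono (subset_univ _) (Icc_subset_Icc ht₁ ht₂)
    _ = _ := intervalIntegral.integral_congr fun t htt => by
        simp only [intervalIntegral.integral_neg, sol.integral_ht_eq_flux_sub (hmem htt), neg_sub]

theorem sq_mul_sub_le_sqrt_mul_sqrt (sol : ClassicalSolutionI a S ε T h hx hxx hxxx hxxxx ht)
    {x₀ r δ t₁ t₂ : ℝ} (hr : 0 ≤ r) (hsub : Icc (x₀ - r) (x₀ + r) ⊆ Icc (-a) a) (ht₁ : 0 ≤ t₁)
    (ht₁₂ : t₁ ≤ t₂) (ht₂ : t₂ ≤ T)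
    (hosc : ∀ x ∈ Icc (x₀ - r) (x₀ + r), |(h x t₁ - h x t₂) - (h x₀ t₁ - h x₀ t₂)| ≤ δ) :
    r ^ 2 * (|h x₀ t₁ - h x₀ t₂| - δ) ≤
      √(2 * r * (t₂ - t₁)) *
        √(∫ t in (0:ℝ)..T, ∫ x in (-a)..a, modelIFlux S ε h hx hxxx x t ^ 2) := by
  have hT : 0 ≤ T := ht₁.trans (ht₁₂.trans ht₂)
  -- Clamping `t` to `[0, T]` makes the flux continuous on all of `ℝ × ℝ`, as the
  -- parametric-integral lemmas require, without changing it on the slab.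
  set f : ℝ → ℝ → ℝ := fun x t => modelIFlux S ε h hx hxxx x (projIcc 0 T hT t)
  have hf : Continuous (uncurry f) := sol.continuousOn_flux.continuous_uncurry_projIcc hT
  have hf_eq : ∀ x, ∀ t ∈ Icc 0 T, f x t = modelIFlux S ε h hx hxxx x t := fun x t htT => by
    simp only [f, projIcc_of_mem hT htT]
  have hbal : ∀ ρ ∈ Icc 0 r, ∫ x in (x₀ - ρ)..(x₀ + ρ), (h x t₁ - h x t₂) =
      ∫ t in t₁..t₂, (f (x₀ + ρ) t - f (x₀ - ρ) t) := fun ρ hρ => by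
    rw [sol.integral_sub_eq_integral_flux_sub (by linarith [hρ.1]) ht₁ ht₁₂ ht₂]
    exact intervalIntegral.integral_congr fun t htt => by
      simp only [hf_eq _ t (uIcc_subset_Icc ⟨ht₁, ht₁₂.trans ht₂⟩ ⟨ht₁.trans ht₁₂, ht₂⟩ htt)]
  calc r ^ 2 * (|h x₀ t₁ - h x₀ t₂| - δ)
      ≤ ∫ t in t₁..t₂, ∫ x in (x₀ - r)..(x₀ + r), |f x t| :=
        sq_mul_sub_le_integral_integral_abs
          ((sol.continuous_slice ⟨ht₁, ht₁₂.trans ht₂⟩).sub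
            (sol.continuous_slice ⟨ht₁.trans ht₁₂, ht₂⟩)) hf hr ht₁₂ hbal hosc
    _ ≤ √((x₀ + r - (x₀ - r)) * (t₂ - t₁)) *
          √(∫ t in t₁..t₂, ∫ x in (x₀ - r)..(x₀ + r), f x t ^ 2) :=
        integral_integral_abs_le_sqrt_mul_sqrt hf (by linarith) ht₁₂
    _ ≤ √(2 * r * (t₂ - t₁)) * √(∫ t in (0:ℝ)..T, ∫ x in (-a)..a, f x t ^ 2) := by
        rw [show x₀ + r - (x₀ - r) = 2 * r by ring]
        gcongr
        exact integral_integral_mono_of_subset (φ := fun x t => f x t ^ 2) (by exact hf.pow 2)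
          (fun _ _ => sq_nonneg _)
          (hsub ⟨le_rfl, by linarith⟩).1 (by linarith) (hsub ⟨by linarith, le_rfl⟩).2 ht₁ ht₁₂ ht₂
    _ = _ := by
        congr 2
        exact intervalIntegral.integral_congr fun t htt => intervalIntegral.integral_congr
          fun x _ => by simp only [hf_eq x t (uIcc_subset_Icc ⟨le_rfl, hT⟩ ⟨hT, le_rfl⟩ htt)]

end ClassicalSolutionI

theorem le_mul_rpow_of_sq_mul_sub_le {K F M τ G : ℝ} (hK : 0 < K) (hF : 0 ≤ F) (hM : 0 < M)
    (hMF : 256 * K ^ 3 * F ≤ M ^ 4) (hτ : 0 < τ)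
    (h : (M ^ 2 / (16 * K ^ 2) * τ ^ ((1:ℝ)/4)) ^ 2 *
        (G - 2 * K * (M ^ 2 / (16 * K ^ 2) * τ ^ ((1:ℝ)/4)) ^ ((1:ℝ)/2))
      ≤ √(2 * (M ^ 2 / (16 * K ^ 2) * τ ^ ((1:ℝ)/4)) * τ) * F) :
    G ≤ M * τ ^ ((1:ℝ)/8) := by
  set u := τ ^ ((1:ℝ)/8)
  have hu : 0 < u := by positivity
  have hpow : ∀ n : ℕ, τ ^ ((n:ℝ)/8) = u ^ n := fun n => by
    rw [← Real.rpow_natCast, ← Real.rpow_mul hτ.le]; ring_nf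
  have h4 : τ ^ ((1:ℝ)/4) = u ^ 2 := by rw [← hpow 2]; norm_num
  have h8 : τ = u ^ 8 := by rw [← hpow 8]; norm_num
  set c := M ^ 2 / (16 * K ^ 2) * u ^ 2
  have hc : 0 < c := by positivity
  have hsqrt_c : c ^ ((1:ℝ)/2) = M * u / (4 * K) := by
    rw [← Real.sqrt_eq_rpow, show c = (M * u / (4 * K)) ^ 2 by simp only [c]; field_simp; ring]
    exact Real.sqrt_sq (by positivity)
  have hsqrt : √(2 * c * τ) = √2 * (M * u ^ 5 / (4 * K)) := by
    rw [← Real.sqrt_sq (by positivity : 0 ≤ M * u ^ 5 / (4 * K)), ← Real.sqrt_mul zero_le_two,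
      h8]
    congr 1; simp only [c]; field_simp; ring
  rw [h4, hsqrt_c, hsqrt] at h
  have hbound : √2 * (M * u ^ 5 / (4 * K)) * F ≤ c ^ 2 * (M * u / 2) :=
    calc √2 * (M * u ^ 5 / (4 * K)) * F ≤ 2 * (M * u ^ 5 / (4 * K)) * F := by
          gcongr; exact Real.sqrt_le_iff.2 ⟨zero_le_two, by norm_num⟩
      _ = M * u ^ 5 / (512 * K ^ 4) * (256 * K ^ 3 * F) := by field_simp; ring
      _ ≤ M * u ^ 5 / (512 * K ^ 4) * M ^ 4 := by gcongr
      _ = c ^ 2 * (M * u / 2) := by simp only [c]; field_simp; ring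
  have := le_of_mul_le_mul_left ((h.trans hbound).trans_eq (by ring) :
    c ^ 2 * (G - 2 * K * (M * u / (4 * K))) ≤ c ^ 2 * (M * u / 2)) (by positivity)
  rw [show 2 * K * (M * u / (4 * K)) = M * u / 2 by field_simp; ring] at this
  linarith

/-- Hölder continuity in time for regularized Model I: from the uniform `1/2`-Hölder
bound in `x` with constant `K₃` and the `L²(Q_T)` norm `F` of the flux, one gets a
`1/8`-Hölder bound in time with constant depending only on `K₃` and `F`. -/
theorem modelI_time_holder
    (K₃ F : ℝ) (hK₃ : 0 < K₃) :
    ∃ Mbar : ℝ, 0 < Mbar ∧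
      ∀ a S ε T : ℝ, 0 < a → 0 < S → 0 < ε → 0 < T →
      ∀ h hx hxx hxxx hxxxx ht : ℝ → ℝ → ℝ,
        ClassicalSolutionI a S ε T h hx hxx hxxx hxxxx ht →
        (∀ x₁ ∈ Set.Icc (-a) a, ∀ x₂ ∈ Set.Icc (-a) a, ∀ t ∈ Set.Icc (0:ℝ) T,
            |h x₁ t - h x₂ t| ≤ K₃ * |x₁ - x₂| ^ ((1:ℝ)/2)) →
        Real.sqrt (∫ t in (0:ℝ)..T, ∫ x in (-a)..a,
            ((h x t)^2 / 2 + S * (|h x t| ^ 3 + ε) * (hx x t + hxxx x t))^2) = F →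
        ∀ x₀ ∈ Set.Ioo (-a) a, ∀ t₁ t₂ : ℝ, 0 ≤ t₁ → t₁ < t₂ → t₂ ≤ T →
          Set.Icc (x₀ - (Mbar^2 / (16 * K₃^2)) * (t₂ - t₁) ^ ((1:ℝ)/4))
                  (x₀ + (Mbar^2 / (16 * K₃^2)) * (t₂ - t₁) ^ ((1:ℝ)/4))
            ⊆ Set.Ioo (-a) a →
          |h x₀ t₁ - h x₀ t₂| ≤ Mbar * (t₂ - t₁) ^ ((1:ℝ)/8) := by
  set M := (256 * K₃ ^ 3 * (|F| + 1)) ^ ((1:ℝ)/4)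
  have hM4 : M ^ 4 = 256 * K₃ ^ 3 * (|F| + 1) := by
    rw [← Real.rpow_natCast, ← Real.rpow_mul (by positivity)]; norm_num
  refine ⟨M, by positivity, ?_⟩
  intro a S ε T _ _ _ _ h hx hxx hxxx hxxxx ht sol hHold hF x₀ _ t₁ t₂ ht₁ ht₁₂ ht₂ hsub
  have hF0 : 0 ≤ F := hF ▸ Real.sqrt_nonneg _
  set r := M ^ 2 / (16 * K₃ ^ 2) * (t₂ - t₁) ^ ((1:ℝ)/4)
  have hr : 0 ≤ r := by positivity
  have hsub' : Icc (x₀ - r) (x₀ + r) ⊆ Icc (-a) a := hsub.trans Ioo_subset_Icc_self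
  have hosc := abs_sub_sub_le_of_holder hK₃.le hHold ⟨ht₁, ht₁₂.le.trans ht₂⟩
    ⟨ht₁.trans ht₁₂.le, ht₂⟩ hr hsub'
  have hest := sol.sq_mul_sub_le_sqrt_mul_sqrt hr hsub' ht₁ ht₁₂.le ht₂ hosc
  rw [show √(∫ t in (0:ℝ)..T, ∫ x in (-a)..a, modelIFlux S ε h hx hxxx x t ^ 2) = F from hF] at hest
  exact le_mul_rpow_of_sq_mul_sub_le hK₃ hF0 (by positivity)
    (by rw [hM4, abs_of_nonneg hF0]; gcongr; linarith) (sub_pos.2 ht₁₂) hest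
end

section
/- Let h be a classical periodic solution of the regularized Model I equation on [0,T], and fix any A > 0. Then for every T′ ∈ [0,T] the entropy identity holds: ∫_{−a}^{a} G_ε(h(x,T′)) dx + S·∫_0^{T′} ∫_{−a}^{a} h_xx² dx dt = ∫_{−a}^{a} G_ε(h(x,0)) dx + S·∫_0^{T′} ∫_{−a}^{a} h_x² dx dt. -/
/-- `g_ε(s) = -∫_s^A dr / (|r|³ + ε)`. -/
noncomputable def gEps (A ε s : ℝ) : ℝ := -∫ r in s..A, 1 / (|r| ^ 3 + ε)

/-- `G_ε(s) = -∫_s^A g_ε(r) dr`. -/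
noncomputable def GEps (A ε s : ℝ) : ℝ := -∫ r in s..A, gEps A ε r

open MeasureTheory Set Function
open scoped Interval

theorem continuous_one_div_abs_pow_three_add {ε : ℝ} (hε : 0 < ε) :
    Continuous fun r : ℝ => 1 / (|r| ^ 3 + ε) :=
  continuous_const.div ((continuous_abs.pow 3).add continuous_const) fun r => by positivity

theorem gEps_eq_integral (A ε s : ℝ) : gEps A ε s = ∫ r in A..s, 1 / (|r| ^ 3 + ε) := by
  rw [gEps, intervalIntegral.integral_symm, neg_neg]

theorem GEps_eq_integral (A ε s : ℝ) : GEps A ε s = ∫ r in A..s, gEps A ε r := by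
  rw [GEps, intervalIntegral.integral_symm, neg_neg]

theorem hasDerivAt_gEps (A : ℝ) {ε : ℝ} (hε : 0 < ε) (s : ℝ) :
    HasDerivAt (gEps A ε) (1 / (|s| ^ 3 + ε)) s := by
  simpa only [← gEps_eq_integral] using
    ((continuous_one_div_abs_pow_three_add hε).integral_hasStrictDerivAt A s).hasDerivAt

theorem continuous_gEps (A : ℝ) {ε : ℝ} (hε : 0 < ε) : Continuous (gEps A ε) :=
  continuous_iff_continuousAt.2 fun s => (hasDerivAt_gEps A hε s).continuousAt

theorem continuous_GEps (A : ℝ) {ε : ℝ} (hε : 0 < ε) : Continuous (GEps A ε) := by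
  simpa only [← GEps_eq_integral] using
    intervalIntegral.continuous_primitive (μ := volume)
      (fun _ _ => (continuous_gEps A hε).intervalIntegrable _ _) A

theorem Function.Periodic.periodic_of_hasDerivAt {𝕜 E : Type*} [NontriviallyNormedField 𝕜]
    [NormedAddCommGroup E] [NormedSpace 𝕜 E] {f f' : 𝕜 → E} {c : 𝕜} (hf : Periodic f c)
    (hd : ∀ x, HasDerivAt f (f' x) x) : Periodic f' c := fun x => by
  have hshift : HasDerivAt (fun y => f (y + c)) (f' (x + c)) x := (hd (x + c)).comp_add_const x c
  rw [hf.funext] at hshift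
  exact hshift.unique (hd x)

theorem continuousOn_intervalIntegral_of_continuousOn_univ_prod {F : ℝ → ℝ → ℝ} {c d : ℝ}
    (hcd : c ≤ d) (hF : ContinuousOn (uncurry F) (univ ×ˢ Icc c d)) (a b : ℝ) :
    ContinuousOn (fun t => ∫ x in a..b, F x t) (Icc c d) := by
  have hext : Continuous (uncurry fun t x => F x (projIcc c d hcd t)) :=
    hF.comp_continuous (continuous_snd.prodMk (continuous_subtype_val.comp
      ((continuous_projIcc (h := hcd)).comp continuous_fst))) fun p => ⟨trivial, Subtype.prop _⟩
  refine (intervalIntegral.continuous_parametric_intervalIntegral_of_continuous' (μ := volume)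
    hext a b).continuousOn.congr fun t ht => ?_
  simp only [projIcc_of_mem hcd ht]

theorem intervalIntegral_swap_of_continuousOn {F : ℝ → ℝ → ℝ} {a b c d : ℝ}
    (hF : ContinuousOn (uncurry F) ([[a, b]] ×ˢ [[c, d]])) :
    ∫ x in a..b, ∫ t in c..d, F x t = ∫ t in c..d, ∫ x in a..b, F x t := by
  refine intervalIntegral_intervalIntegral_swap ?_
  exact (hF.integrableOn_compact (isCompact_uIcc.prod isCompact_uIcc)).mono_set
    (prod_mono uIoc_subset_uIcc uIoc_subset_uIcc)

theorem GEps_sub_eq_integral (A : ℝ) {ε : ℝ} (hε : 0 < ε) {φ φ' : ℝ → ℝ} {c d : ℝ} (hcd : c ≤ d)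
    (hφ : ∀ t ∈ Icc c d, HasDerivWithinAt φ (φ' t) (Icc c d) t) (hφ' : ContinuousOn φ' (Icc c d)) :
    GEps A ε (φ d) - GEps A ε (φ c) = ∫ t in c..d, gEps A ε (φ t) * φ' t := by
  rw [← uIcc_of_le hcd] at hφ hφ'
  have hcont : ContinuousOn φ [[c, d]] := fun t ht => (hφ t ht).continuousWithinAt
  have hderiv : ∀ t ∈ Ioo (min c d) (max c d), HasDerivWithinAt φ (φ' t) (Ioi t) t := fun t ht =>
    ((hφ t (Ioo_subset_Icc_self ht)).hasDerivAt (Icc_mem_nhds ht.1 ht.2)).hasDerivWithinAt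
  have hsubst := intervalIntegral.integral_comp_mul_deriv'' hcont hderiv hφ'
    (continuous_gEps A hε).continuousOn
  simp only [comp_apply] at hsubst
  rw [hsubst, GEps_eq_integral, GEps_eq_integral, intervalIntegral.integral_interval_sub_left]
  all_goals exact (continuous_gEps A hε).intervalIntegrable _ _

theorem integral_gEps_mul_eq {A S ε a b : ℝ} (hε : 0 < ε) {u u₁ u₂ u₃ w : ℝ → ℝ}
    (hper : Periodic u (b - a)) (hu : ∀ y, HasDerivAt u (u₁ y) y)
    (hu₁ : ∀ y, HasDerivAt u₁ (u₂ y) y) (hu₂ : ∀ y, HasDerivAt u₂ (u₃ y) y)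
    (hflux : ∀ y, HasDerivAt (fun z => S * ((|u z| ^ 3 + ε) * (u₁ z + u₃ z)))
      (-w y - u y * u₁ y) y)
    (hw : Continuous w) :
    ∫ y in a..b, gEps A ε (u y) * w y
      = S * ((∫ y in a..b, u₁ y ^ 2) - ∫ y in a..b, u₂ y ^ 2) := by
  have hg := continuous_gEps A hε
  have hper₁ := hper.periodic_of_hasDerivAt hu
  have hper₂ := hper₁.periodic_of_hasDerivAt hu₁
  have hper₃ := hper₂.periodic_of_hasDerivAt hu₂
  -- `Φ(u)` with `Φ' (s) = s g_ε(s)` absorbs the transport term; the flux term is integrated by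
  -- parts twice, and `g_ε'(u) = 1 / (|u|³ + ε)` cancels the mobility.
  set W : ℝ → ℝ := fun y => -(∫ r in (0:ℝ)..u y, r * gEps A ε r)
    - gEps A ε (u y) * (S * ((|u y| ^ 3 + ε) * (u₁ y + u₃ y))) + S * (u₁ y * u₂ y)
  have hW : ∀ y, HasDerivAt W (gEps A ε (u y) * w y - S * (u₁ y ^ 2 - u₂ y ^ 2)) y := by
    intro y
    have hΦ := ((continuous_id.mul hg).integral_hasStrictDerivAt 0 (u y)).hasDerivAt.comp y (hu y)
    have hgu := (hasDerivAt_gEps A hε (u y)).comp y (hu y)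
    refine ((hΦ.neg.sub (hgu.mul (hflux y))).add
      (((hu₁ y).mul (hu₂ y)).const_mul S)).congr_deriv ?_
    have hpos : |u y| ^ 3 + ε ≠ 0 := by positivity
    simp only [comp_apply, Pi.mul_apply, id_eq]
    field_simp
    ring
  have hWper : W b = W a := by
    have hb : b = a + (b - a) := by ring
    simp only [W]
    rw [hb, hper, hper₁, hper₂, hper₃]
  have hcont₁ : Continuous u₁ := continuous_iff_continuousAt.2 fun y => (hu₁ y).continuousAt
  have hcont₂ : Continuous u₂ := continuous_iff_continuousAt.2 fun y => (hu₂ y).continuousAt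
  have hcont : Continuous u := continuous_iff_continuousAt.2 fun y => (hu y).continuousAt
  have hgw : Continuous fun y => gEps A ε (u y) * w y := (hg.comp hcont).mul hw
  have hsq₁ : Continuous fun y => u₁ y ^ 2 := hcont₁.pow 2
  have hsq₂ : Continuous fun y => u₂ y ^ 2 := hcont₂.pow 2
  have hsq : Continuous fun y => S * (u₁ y ^ 2 - u₂ y ^ 2) := continuous_const.mul (hsq₁.sub hsq₂)
  have hFTC := intervalIntegral.integral_eq_sub_of_hasDerivAt (fun y _ => hW y)
    ((hgw.sub hsq).intervalIntegrable a b)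
  rw [hWper, sub_self, intervalIntegral.integral_sub (hgw.intervalIntegrable a b)
    (hsq.intervalIntegrable a b), sub_eq_zero] at hFTC
  rw [hFTC, intervalIntegral.integral_const_mul, intervalIntegral.integral_sub
    (hsq₁.intervalIntegrable a b) (hsq₂.intervalIntegrable a b)]

namespace ClassicalSolutionI

variable {a S ε T : ℝ} {h hx hxx hxxx hxxxx ht : ℝ → ℝ → ℝ}

theorem integral_gEps_mul_ht (hsol : ClassicalSolutionI a S ε T h hx hxx hxxx hxxxx ht) (A : ℝ)
    (hε : 0 < ε) {t : ℝ} (htT : t ∈ Icc 0 T) :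
    ∫ x in (-a)..a, gEps A ε (h x t) * ht x t
      = S * ((∫ x in (-a)..a, hx x t ^ 2) - ∫ x in (-a)..a, hxx x t ^ 2) := by
  have hper : Periodic (h · t) (a - -a) := by
    rw [sub_neg_eq_add, ← two_mul]
    exact (hsol.periodic_x · t)
  exact integral_gEps_mul_eq hε hper (hsol.deriv_hx · t htT) (hsol.deriv_hxx · t htT)
    (hsol.deriv_hxxx · t htT) (hsol.pde · t htT)
    (continuousOn_univ.1 (hsol.cont_ht.uncurry_right (f := ht) t htT))

theorem GEps_sub_eq_integral_ht (hsol : ClassicalSolutionI a S ε T h hx hxx hxxx hxxxx ht)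
    (A : ℝ) (hε : 0 < ε) (x : ℝ) {T' : ℝ} (hT' : T' ∈ Icc 0 T) :
    GEps A ε (h x T') - GEps A ε (h x 0) = ∫ t in (0:ℝ)..T', gEps A ε (h x t) * ht x t := by
  have hsub : Icc 0 T' ⊆ Icc 0 T := Icc_subset_Icc_right hT'.2
  exact GEps_sub_eq_integral A hε hT'.1
    (fun t htT' => (hsol.deriv_ht x t (hsub htT')).mono hsub)
    ((hsol.cont_ht.uncurry_left (f := ht) x (mem_univ x)).mono hsub)

theorem integral_GEps_sub_eq (hsol : ClassicalSolutionI a S ε T h hx hxx hxxx hxxxx ht)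
    (A : ℝ) (hε : 0 < ε) {T' : ℝ} (hT' : T' ∈ Icc 0 T) :
    (∫ x in (-a)..a, GEps A ε (h x T')) - ∫ x in (-a)..a, GEps A ε (h x 0)
      = ∫ t in (0:ℝ)..T', ∫ x in (-a)..a, gEps A ε (h x t) * ht x t := by
  have hsub : [[0, T']] ⊆ Icc 0 T := by rw [uIcc_of_le hT'.1]; exact Icc_subset_Icc_right hT'.2
  have hG : ∀ s ∈ Icc 0 T, IntervalIntegrable (fun x => GEps A ε (h x s)) volume (-a) a :=
    fun s hs => ((continuous_GEps A hε).comp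
      (continuousOn_univ.1 (hsol.cont_h.uncurry_right (f := h) s hs))).intervalIntegrable _ _
  have hflux : ContinuousOn (uncurry fun x t => gEps A ε (h x t) * ht x t)
      ([[-a, a]] ×ˢ [[0, T']]) :=
    (((continuous_gEps A hε).comp_continuousOn hsol.cont_h).mul hsol.cont_ht).mono
      (prod_mono (subset_univ _) hsub)
  rw [← intervalIntegral.integral_sub (hG T' hT') (hG 0 ⟨le_rfl, hT'.1.trans hT'.2⟩),
    ← intervalIntegral_swap_of_continuousOn hflux]
  exact intervalIntegral.integral_congr fun x _ => hsol.GEps_sub_eq_integral_ht A hε x hT'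

end ClassicalSolutionI

theorem modelI_entropy_identity_general
    (a S ε T A : ℝ) (hε : 0 < ε)
    (h hx hxx hxxx hxxxx ht : ℝ → ℝ → ℝ)
    (hsol : ClassicalSolutionI a S ε T h hx hxx hxxx hxxxx ht) :
    ∀ T' ∈ Set.Icc (0:ℝ) T,
      (∫ x in (-a)..a, GEps A ε (h x T'))
        + S * ∫ t in (0:ℝ)..T', ∫ x in (-a)..a, (hxx x t)^2
      = (∫ x in (-a)..a, GEps A ε (h x 0))
        + S * ∫ t in (0:ℝ)..T', ∫ x in (-a)..a, (hx x t)^2 := by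
  intro T' hT'
  have hsub : [[0, T']] ⊆ Icc 0 T := by rw [uIcc_of_le hT'.1]; exact Icc_subset_Icc_right hT'.2
  have hsq_integrable : ∀ f : ℝ → ℝ → ℝ, ContinuousOn (uncurry f) (univ ×ˢ Icc 0 T) →
      IntervalIntegrable (fun t => ∫ x in (-a)..a, f x t ^ 2) volume 0 T' := fun f hf =>
    ((continuousOn_intervalIntegral_of_continuousOn_univ_prod (F := fun x t => f x t ^ 2)
      (hT'.1.trans hT'.2) ((continuous_pow 2).comp_continuousOn hf) _ _).mono
      hsub).intervalIntegrable
  have key : (∫ x in (-a)..a, GEps A ε (h x T')) - ∫ x in (-a)..a, GEps A ε (h x 0)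
      = S * ((∫ t in (0:ℝ)..T', ∫ x in (-a)..a, hx x t ^ 2)
        - ∫ t in (0:ℝ)..T', ∫ x in (-a)..a, hxx x t ^ 2) := calc
    _ = ∫ t in (0:ℝ)..T', ∫ x in (-a)..a, gEps A ε (h x t) * ht x t :=
      hsol.integral_GEps_sub_eq A hε hT'
    _ = ∫ t in (0:ℝ)..T', S * ((∫ x in (-a)..a, hx x t ^ 2) - ∫ x in (-a)..a, hxx x t ^ 2) :=
      intervalIntegral.integral_congr fun t ht => hsol.integral_gEps_mul_ht A hε (hsub ht)
    _ = _ := by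
      rw [intervalIntegral.integral_const_mul,
        intervalIntegral.integral_sub (hsq_integrable hx hsol.cont_hx) (hsq_integrable hxx hsol.cont_hxx)]
  linarith

/-- Entropy identity for regularized Model I:
`∫ G_ε(h(·,T')) + S∫₀^{T'}∫ h_xx² = ∫ G_ε(h(·,0)) + S∫₀^{T'}∫ h_x²`. -/
theorem modelI_entropy_identity
    (a S ε T A : ℝ) (ha : 0 < a) (hS : 0 < S) (hε : 0 < ε) (hT : 0 < T) (hA : 0 < A)
    (h hx hxx hxxx hxxxx ht : ℝ → ℝ → ℝ)
    (hsol : ClassicalSolutionI a S ε T h hx hxx hxxx hxxxx ht) :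
    ∀ T' ∈ Set.Icc (0:ℝ) T,
      (∫ x in (-a)..a, GEps A ε (h x T'))
        + S * ∫ t in (0:ℝ)..T', ∫ x in (-a)..a, (hxx x t)^2
      = (∫ x in (-a)..a, GEps A ε (h x 0))
        + S * ∫ t in (0:ℝ)..T', ∫ x in (-a)..a, (hx x t)^2 :=
  modelI_entropy_identity_general a S ε T A hε h hx hxx hxxx hxxxx ht hsol
end
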